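/- arXiv:2212.14105 — 8 statements merged into one kernel-verified Lean document; each statement's English description precedes it below -/
import Mathlib

section
/- Under random assignment, exclusion, treatment monotonicity, and outcome monotonicity, the population share of supercompliers (individuals with D1 > D0 and Y1 > Y0) equals the reduced form: Pr(G = cc) = E[Y | Z=1] − E[Y | Z=0]. -/
/-!
Write `W = (Y0, Y1, D0, D1)` and `Y(d) = d Y1 + (1 - d) Y0`. On `{Z = z}` the observed outcome is
`Y(D_z)`, a function of `W`, so independence of `W` and `Z` turns `E[Y | Z = z]` into `E[Y(D_z)]`.
The reduced form is therefore `E[Y(D1) - Y(D0)] = E[(D1 - D0)(Y1 - Y0)]`, and under both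
monotonicity assumptions the binary product `(D1 - D0)(Y1 - Y0)` is a.s. the indicator of the
supercompliers.
-/

open MeasureTheory ProbabilityTheory

/-- Conditional mean of `f` given event `s`. -/
noncomputable def cmean {Ω : Type} [MeasurableSpace Ω] (μ : Measure Ω)
    (f : Ω → ℝ) (s : Set Ω) : ℝ :=
  (∫ ω in s, f ω ∂μ) / (μ s).toReal

def potentialOutcome (d y0 y1 : ℝ) : ℝ := d * y1 + (1 - d) * y0

theorem potentialOutcome_sub_potentialOutcome (d0 d1 y0 y1 : ℝ) :
    potentialOutcome d1 y0 y1 - potentialOutcome d0 y0 y1 = (d1 - d0) * (y1 - y0) := by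
  unfold potentialOutcome
  ring

theorem abs_potentialOutcome_le_one {d y0 y1 : ℝ} (hd : d = 0 ∨ d = 1) (hy0 : y0 = 0 ∨ y0 = 1)
    (hy1 : y1 = 0 ∨ y1 = 1) : |potentialOutcome d y0 y1| ≤ 1 := by
  rcases hd with rfl | rfl <;> rcases hy0 with rfl | rfl <;> rcases hy1 with rfl | rfl <;>
    norm_num [potentialOutcome]

theorem sub_mul_sub_eq_ite {d0 d1 y0 y1 : ℝ} (hd0 : d0 = 0 ∨ d0 = 1) (hd1 : d1 = 0 ∨ d1 = 1)
    (hy0 : y0 = 0 ∨ y0 = 1) (hy1 : y1 = 0 ∨ y1 = 1) (hd : d0 ≤ d1) (hy : y0 ≤ y1) :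
    (d1 - d0) * (y1 - y0) = if d0 < d1 ∧ y0 < y1 then 1 else 0 := by
  rcases hd0 with rfl | rfl <;> rcases hd1 with rfl | rfl <;> rcases hy0 with rfl | rfl <;>
    rcases hy1 with rfl | rfl <;> revert hd hy <;> norm_num

section Measure

variable {Ω α β : Type} [MeasurableSpace Ω] [MeasurableSpace α] [MeasurableSpace β]
  {μ : Measure Ω}

@[fun_prop]
theorem Measurable.potentialOutcome {d y0 y1 : α → ℝ} (hd : Measurable d) (hy0 : Measurable y0)
    (hy1 : Measurable y1) : Measurable fun x => potentialOutcome (d x) (y0 x) (y1 x) := by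
  unfold _root_.potentialOutcome
  fun_prop

theorem integrable_potentialOutcome [IsFiniteMeasure μ] {D Y0 Y1 : Ω → ℝ} (hDm : Measurable D)
    (hY0m : Measurable Y0) (hY1m : Measurable Y1) (hD : ∀ ω, D ω = 0 ∨ D ω = 1)
    (hY0 : ∀ ω, Y0 ω = 0 ∨ Y0 ω = 1) (hY1 : ∀ ω, Y1 ω = 0 ∨ Y1 ω = 1) :
    Integrable (fun ω => potentialOutcome (D ω) (Y0 ω) (Y1 ω)) μ :=
  Integrable.of_bound (hDm.potentialOutcome hY0m hY1m).aestronglyMeasurable 1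
    (ae_of_all _ fun ω => abs_potentialOutcome_le_one (hD ω) (hY0 ω) (hY1 ω))

theorem measure_ne_zero_of_union_eq_univ [IsProbabilityMeasure μ] {s t : Set Ω}
    (hst : s ∪ t = Set.univ) (hs : μ s < 1) : μ t ≠ 0 := by
  intro ht
  have hcover := measure_union_le (μ := μ) s t
  rw [hst, measure_univ, ht, add_zero] at hcover
  exact hs.not_ge hcover

theorem cmean_eq_integral_of_indepFun [IsFiniteMeasure μ] {W : Ω → α} {Z : Ω → β}
    (hind : IndepFun W Z μ) {g : α → ℝ} (hg : Measurable g) (hW : AEMeasurable W μ)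
    (hZ : Measurable Z) {C : Set β} (hC : MeasurableSet C) (hZC0 : μ (Z ⁻¹' C) ≠ 0)
    {Y : Ω → ℝ} (hY : Set.EqOn Y (g ∘ W) (Z ⁻¹' C)) :
    cmean μ Y (Z ⁻¹' C) = ∫ ω, g (W ω) ∂μ := by
  have hZC : MeasurableSet (Z ⁻¹' C) := hZ hC
  have hind' : IndepFun (g ∘ W) ((Z ⁻¹' C).indicator (1 : Ω → ℝ)) μ := by
    have hC1 : Measurable (C.indicator (1 : β → ℝ)) := measurable_const.indicator hC
    convert hind.comp hg hC1 using 1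
    ext ω
    exact Set.indicator_comp_right (g := (1 : β → ℝ)) Z
  have hintegral :
      ∫ ω in Z ⁻¹' C, Y ω ∂μ = (∫ ω, g (W ω) ∂μ) * μ.real (Z ⁻¹' C) :=
    calc ∫ ω in Z ⁻¹' C, Y ω ∂μ
      _ = ∫ ω, g (W ω) * (Z ⁻¹' C).indicator 1 ω ∂μ := by
          rw [setIntegral_congr_fun hZC hY, ← integral_indicator hZC]
          congr 1 with ω
          by_cases hω : ω ∈ Z ⁻¹' C <;> simp [hω]
      _ = (∫ ω, g (W ω) ∂μ) * μ.real (Z ⁻¹' C) := by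
          rw [← integral_indicator_one hZC]
          exact hind'.integral_fun_mul_eq_mul_integral
            (hg.comp_aemeasurable hW).aestronglyMeasurable
            (measurable_const.indicator hZC).aestronglyMeasurable
  have hpos : μ.real (Z ⁻¹' C) ≠ 0 := (measureReal_ne_zero_iff (measure_ne_top _ _)).mpr hZC0
  rw [cmean, hintegral, ← measureReal_def]
  field_simp

end Measure

theorem supercomplier_share
    {Ω : Type} [MeasurableSpace Ω] (μ : Measure Ω) [IsProbabilityMeasure μ]
    (Z D0 D1 Y0 Y1 D Y : Ω → ℝ)
    (hZm : Measurable Z) (hD0m : Measurable D0) (hD1m : Measurable D1)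
    (hY0m : Measurable Y0) (hY1m : Measurable Y1)
    (hZbin : ∀ ω, Z ω = 0 ∨ Z ω = 1)
    (hD0bin : ∀ ω, D0 ω = 0 ∨ D0 ω = 1)
    (hD1bin : ∀ ω, D1 ω = 0 ∨ D1 ω = 1)
    (hY0bin : ∀ ω, Y0 ω = 0 ∨ Y0 ω = 1)
    (hY1bin : ∀ ω, Y1 ω = 0 ∨ Y1 ω = 1)
    (hD : ∀ ω, D ω = Z ω * D1 ω + (1 - Z ω) * D0 ω)
    (hY : ∀ ω, Y ω = D ω * Y1 ω + (1 - D ω) * Y0 ω)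
    (hindep : IndepFun (fun ω => (Y0 ω, Y1 ω, D0 ω, D1 ω)) Z μ)
    (hz0 : 0 < μ {ω | Z ω = 1}) (hz1 : μ {ω | Z ω = 1} < 1)
    (hmonoD : ∀ᵐ ω ∂μ, D0 ω ≤ D1 ω)
    (hmonoY : ∀ᵐ ω ∂μ, Y0 ω ≤ Y1 ω) :
    (μ {ω | D0 ω < D1 ω ∧ Y0 ω < Y1 ω}).toReal
      = cmean μ Y {ω | Z ω = 1} - cmean μ Y {ω | Z ω = 0} := by
  have hWm : Measurable fun ω => (Y0 ω, Y1 ω, D0 ω, D1 ω) := by fun_prop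
  have hmean1 :
      cmean μ Y {ω | Z ω = 1} = ∫ ω, potentialOutcome (D1 ω) (Y0 ω) (Y1 ω) ∂μ :=
    cmean_eq_integral_of_indepFun hindep (g := fun p => potentialOutcome p.2.2.2 p.1 p.2.1)
      (by fun_prop) hWm.aemeasurable hZm (measurableSet_singleton 1) hz0.ne'
      fun ω hω => by
        simp only [Set.mem_preimage, Set.mem_singleton_iff] at hω
        simp only [hY, hD, hω, Function.comp_apply, potentialOutcome]
        ring
  have hZ0 : μ {ω | Z ω = 0} ≠ 0 :=
    measure_ne_zero_of_union_eq_univ (Set.eq_univ_of_forall fun ω => (hZbin ω).symm) hz1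
  have hmean0 :
      cmean μ Y {ω | Z ω = 0} = ∫ ω, potentialOutcome (D0 ω) (Y0 ω) (Y1 ω) ∂μ :=
    cmean_eq_integral_of_indepFun hindep (g := fun p => potentialOutcome p.2.2.1 p.1 p.2.1)
      (by fun_prop) hWm.aemeasurable hZm (measurableSet_singleton 0) hZ0
      fun ω hω => by
        simp only [Set.mem_preimage, Set.mem_singleton_iff] at hω
        simp only [hY, hD, hω, Function.comp_apply, potentialOutcome]
        ring
  have hsupercompliers : MeasurableSet {ω | D0 ω < D1 ω ∧ Y0 ω < Y1 ω} :=
    (measurableSet_lt hD0m hD1m).inter (measurableSet_lt hY0m hY1m)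
  rw [hmean1, hmean0, ← integral_sub
    (integrable_potentialOutcome hD1m hY0m hY1m hD1bin hY0bin hY1bin)
    (integrable_potentialOutcome hD0m hY0m hY1m hD0bin hY0bin hY1bin),
    ← measureReal_def, ← integral_indicator_one hsupercompliers]
  refine integral_congr_ae ?_
  filter_upwards [hmonoD, hmonoY] with ω hd hy
  rw [potentialOutcome_sub_potentialOutcome, Set.indicator_apply,
    sub_mul_sub_eq_ite (hD0bin ω) (hD1bin ω) (hY0bin ω) (hY1bin ω) hd hy]
  rfl
end

section
/- Under the LATE assumptions, outcome monotonicity, a positive supercomplier share, and independence of a covariate X from Z jointly with the potential outcomes, the supercomplier mean of h(X) is identified by the Wald estimand: E[h(X) | D1>D0, Y1>Y0] = (E[h(X)Y | Z=1] − E[h(X)Y | Z=0]) / (E[Y | Z=1] − E[Y | Z=0]). -/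
/-! Given `Z = z`, the observed outcome is the potential outcome `Y_{D_z}` under the potential
treatment `D_z`, and independence of `Z` from `(X, Y₀, Y₁, D₀, D₁)` removes the conditioning:
`E[h(X) Y | Z = z] = E[h(X) Y_{D_z}]`. For binary variables with `D₀ ≤ D₁` and `Y₀ ≤ Y₁`, the
difference `Y_{D₁} - Y_{D₀} = (D₁ - D₀)(Y₁ - Y₀)` is the indicator of the supercompliers
`S = {D₀ < D₁, Y₀ < Y₁}`, so the Wald numerator is `∫_S h(X)` and the denominator is `μ S`. -/

open MeasureTheory ProbabilityTheory

lemma cmean_congr {Ω : Type} [MeasurableSpace Ω] {μ : Measure Ω} {f g : Ω → ℝ} {s : Set Ω}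
    (hs : MeasurableSet s) (hfg : Set.EqOn f g s) : cmean μ f s = cmean μ g s := by
  rw [cmean, cmean, setIntegral_congr_fun hs hfg]

lemma cmean_comp_of_indepFun {Ω 𝓧 β : Type} [MeasurableSpace Ω] [MeasurableSpace 𝓧]
    [MeasurableSpace β] [MeasurableSingletonClass β] {μ : Measure Ω} [IsFiniteMeasure μ]
    {V : Ω → 𝓧} {Z : Ω → β} (hVZ : IndepFun V Z μ) (hV : AEMeasurable V μ) (hZ : Measurable Z)
    {f : 𝓧 → ℝ} (hf : AEStronglyMeasurable f (μ.map V)) {z : β} (hz : μ {ω | Z ω = z} ≠ 0) :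
    cmean μ (fun ω => f (V ω)) {ω | Z ω = z} = ∫ ω, f (V ω) ∂μ := by
  have hzZ : MeasurableSet[MeasurableSpace.comap Z inferInstance] {ω | Z ω = z} :=
    ⟨{z}, measurableSet_singleton z, rfl⟩
  rw [cmean, Indep.setIntegral_eq_mul hZ.comap_le hVZ.symm hV hzZ hf, ← measureReal_def,
    mul_div_cancel_left₀ _ ((measureReal_ne_zero_iff).mpr hz)]

/-- The switching equation `d y₁ + (1 - d) y₀`: both `D` (from `Z`, `D₀`, `D₁`) and `Y`
(from `D`, `Y₀`, `Y₁`) are of this form. -/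
def observed (d y₀ y₁ : ℝ) : ℝ := d * y₁ + (1 - d) * y₀

@[simp] lemma observed_zero (y₀ y₁ : ℝ) : observed 0 y₀ y₁ = y₀ := by simp [observed]

@[simp] lemma observed_one (y₀ y₁ : ℝ) : observed 1 y₀ y₁ = y₁ := by simp [observed]

lemma measurable_observed : Measurable fun p : ℝ × ℝ × ℝ => observed p.1 p.2.1 p.2.2 := by
  unfold observed; fun_prop

lemma abs_observed_le_one {d y₀ y₁ : ℝ} (hd : d = 0 ∨ d = 1) (hy₀ : y₀ = 0 ∨ y₀ = 1)
    (hy₁ : y₁ = 0 ∨ y₁ = 1) : |observed d y₀ y₁| ≤ 1 := by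
  rcases hd with rfl | rfl <;> rcases hy₀ with rfl | rfl <;> rcases hy₁ with rfl | rfl <;> simp

lemma observed_sub_observed {d₀ d₁ y₀ y₁ : ℝ} (hd₀ : d₀ = 0 ∨ d₀ = 1) (hd₁ : d₁ = 0 ∨ d₁ = 1)
    (hy₀ : y₀ = 0 ∨ y₀ = 1) (hy₁ : y₁ = 0 ∨ y₁ = 1) (hd : d₀ ≤ d₁) (hy : y₀ ≤ y₁) :
    observed d₁ y₀ y₁ - observed d₀ y₀ y₁ = if d₀ < d₁ ∧ y₀ < y₁ then 1 else 0 := by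
  rcases hd₀ with rfl | rfl <;> rcases hd₁ with rfl | rfl <;> rcases hy₀ with rfl | rfl <;>
    rcases hy₁ with rfl | rfl <;> norm_num at *

section Model

variable {Ω : Type} [MeasurableSpace Ω] {μ : Measure Ω} {D₀ D₁ Y₀ Y₁ : Ω → ℝ}

lemma integrable_mul_observed {w d : Ω → ℝ} (hw : Integrable w μ) (hdm : Measurable d)
    (hY₀m : Measurable Y₀) (hY₁m : Measurable Y₁) (hd : ∀ ω, d ω = 0 ∨ d ω = 1)
    (hY₀ : ∀ ω, Y₀ ω = 0 ∨ Y₀ ω = 1) (hY₁ : ∀ ω, Y₁ ω = 0 ∨ Y₁ ω = 1) :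
    Integrable (fun ω => w ω * observed (d ω) (Y₀ ω) (Y₁ ω)) μ :=
  hw.mul_bdd (measurable_observed.comp (hdm.prodMk (hY₀m.prodMk hY₁m))).aestronglyMeasurable
    (.of_forall fun ω => by simpa using abs_observed_le_one (hd ω) (hY₀ ω) (hY₁ ω))

lemma integral_mul_observed_sub {w : Ω → ℝ} (hw : Integrable w μ)
    (hD₀m : Measurable D₀) (hD₁m : Measurable D₁) (hY₀m : Measurable Y₀) (hY₁m : Measurable Y₁)
    (hD₀ : ∀ ω, D₀ ω = 0 ∨ D₀ ω = 1) (hD₁ : ∀ ω, D₁ ω = 0 ∨ D₁ ω = 1)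
    (hY₀ : ∀ ω, Y₀ ω = 0 ∨ Y₀ ω = 1) (hY₁ : ∀ ω, Y₁ ω = 0 ∨ Y₁ ω = 1)
    (hmonoD : ∀ᵐ ω ∂μ, D₀ ω ≤ D₁ ω) (hmonoY : ∀ᵐ ω ∂μ, Y₀ ω ≤ Y₁ ω) :
    ∫ ω, w ω * observed (D₁ ω) (Y₀ ω) (Y₁ ω) ∂μ - ∫ ω, w ω * observed (D₀ ω) (Y₀ ω) (Y₁ ω) ∂μ
      = ∫ ω in {ω | D₀ ω < D₁ ω ∧ Y₀ ω < Y₁ ω}, w ω ∂μ := by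
  have hS : MeasurableSet {ω | D₀ ω < D₁ ω ∧ Y₀ ω < Y₁ ω} :=
    (measurableSet_lt hD₀m hD₁m).inter (measurableSet_lt hY₀m hY₁m)
  rw [← integral_sub (integrable_mul_observed hw hD₁m hY₀m hY₁m hD₁ hY₀ hY₁)
    (integrable_mul_observed hw hD₀m hY₀m hY₁m hD₀ hY₀ hY₁), ← integral_indicator hS]
  refine integral_congr_ae ?_
  filter_upwards [hmonoD, hmonoY] with ω hd hy
  rw [← mul_sub, observed_sub_observed (hD₀ ω) (hD₁ ω) (hY₀ ω) (hY₁ ω) hd hy,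
    Set.indicator_apply]
  by_cases hω : D₀ ω < D₁ ω ∧ Y₀ ω < Y₁ ω <;> simp [hω]

lemma cmean_mul_eq_integral_observed [IsFiniteMeasure μ] {X Z D Y : Ω → ℝ} {h : ℝ → ℝ}
    (hXm : Measurable X) (hhm : Measurable h) (hZm : Measurable Z)
    (hD₀m : Measurable D₀) (hD₁m : Measurable D₁) (hY₀m : Measurable Y₀) (hY₁m : Measurable Y₁)
    (hindep : IndepFun (fun ω => (X ω, Y₀ ω, Y₁ ω, D₀ ω, D₁ ω)) Z μ)
    (hD : ∀ ω, D ω = observed (Z ω) (D₀ ω) (D₁ ω)) (hY : ∀ ω, Y ω = observed (D ω) (Y₀ ω) (Y₁ ω))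
    {z : ℝ} (hz : μ {ω | Z ω = z} ≠ 0) :
    cmean μ (fun ω => h (X ω) * Y ω) {ω | Z ω = z}
      = ∫ ω, h (X ω) * observed (observed z (D₀ ω) (D₁ ω)) (Y₀ ω) (Y₁ ω) ∂μ := by
  have hf : Measurable fun p : ℝ × ℝ × ℝ × ℝ × ℝ =>
      h p.1 * observed (observed z p.2.2.2.1 p.2.2.2.2) p.2.1 p.2.2.1 := by
    unfold observed; fun_prop
  calc cmean μ (fun ω => h (X ω) * Y ω) {ω | Z ω = z}
      = cmean μ (fun ω => h (X ω) * observed (observed z (D₀ ω) (D₁ ω)) (Y₀ ω) (Y₁ ω))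
          {ω | Z ω = z} :=
        cmean_congr (hZm (measurableSet_singleton z)) fun ω (hω : Z ω = z) => by
          simp only [hY, hD, hω]
    _ = _ := cmean_comp_of_indepFun hindep (by fun_prop) hZm hf.aestronglyMeasurable hz

end Model

theorem supercomplier_characteristics_wald_general
{Ω : Type} [MeasurableSpace Ω] (μ : Measure Ω) [IsProbabilityMeasure μ]
    (Z D0 D1 Y0 Y1 D Y : Ω → ℝ)
    (hZm : Measurable Z) (hD0m : Measurable D0) (hD1m : Measurable D1)
    (hY0m : Measurable Y0) (hY1m : Measurable Y1)
    (hZbin : ∀ ω, Z ω = 0 ∨ Z ω = 1)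
    (hD0bin : ∀ ω, D0 ω = 0 ∨ D0 ω = 1)
    (hD1bin : ∀ ω, D1 ω = 0 ∨ D1 ω = 1)
    (hY0bin : ∀ ω, Y0 ω = 0 ∨ Y0 ω = 1)
    (hY1bin : ∀ ω, Y1 ω = 0 ∨ Y1 ω = 1)
    (hD : ∀ ω, D ω = Z ω * D1 ω + (1 - Z ω) * D0 ω)
    (hY : ∀ ω, Y ω = D ω * Y1 ω + (1 - D ω) * Y0 ω)
    (hz0 : 0 < μ {ω | Z ω = 1}) (hz1 : μ {ω | Z ω = 1} < 1)
    (hmonoD : ∀ᵐ ω ∂μ, D0 ω ≤ D1 ω)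
    (X : Ω → ℝ) (hXm : Measurable X) (h : ℝ → ℝ) (hhm : Measurable h)
    (hint : Integrable (fun ω => h (X ω)) μ)
    (hindep : IndepFun (fun ω => (X ω, Y0 ω, Y1 ω, D0 ω, D1 ω)) Z μ)
    (hmonoY : ∀ᵐ ω ∂μ, Y0 ω ≤ Y1 ω) :
    cmean μ (fun ω => h (X ω)) {ω | D0 ω < D1 ω ∧ Y0 ω < Y1 ω}
      = (cmean μ (fun ω => h (X ω) * Y ω) {ω | Z ω = 1}
          - cmean μ (fun ω => h (X ω) * Y ω) {ω | Z ω = 0})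
        / (cmean μ Y {ω | Z ω = 1} - cmean μ Y {ω | Z ω = 0}) := by
  have hZ₁ : μ {ω | Z ω = 1} ≠ 0 := hz0.ne'
  have hZ₀ : μ {ω | Z ω = 0} ≠ 0 := by
    have hZ₁m : MeasurableSet {ω | Z ω = 1} := hZm (measurableSet_singleton 1)
    refine (lt_of_lt_of_le ?_ (measure_mono (s := {ω | Z ω = 1}ᶜ)
      fun ω hω => (hZbin ω).resolve_right hω)).ne'
    rw [prob_compl_eq_one_sub hZ₁m]
    exact tsub_pos_of_lt hz1
  have itt {w : ℝ → ℝ} (hwm : Measurable w) {z : ℝ} (hz : μ {ω | Z ω = z} ≠ 0) :=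
    cmean_mul_eq_integral_observed hXm hwm hZm hD0m hD1m hY0m hY1m hindep hD hY hz
  have itt_Y {z : ℝ} (hz : μ {ω | Z ω = z} ≠ 0) :
      cmean μ Y {ω | Z ω = z} = ∫ ω, observed (observed z (D0 ω) (D1 ω)) (Y0 ω) (Y1 ω) ∂μ := by
    simpa only [one_mul] using itt (w := fun _ => 1) measurable_const hz
  rw [itt hhm hZ₁, itt hhm hZ₀, itt_Y hZ₁, itt_Y hZ₀]
  simp only [observed_one, observed_zero]
  have supercomplier_integral {w : Ω → ℝ} (hw : Integrable w μ) :=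
    integral_mul_observed_sub hw hD0m hD1m hY0m hY1m hD0bin hD1bin hY0bin hY1bin hmonoD hmonoY
  have supercomplier_share : ∫ ω, observed (D1 ω) (Y0 ω) (Y1 ω) ∂μ
      - ∫ ω, observed (D0 ω) (Y0 ω) (Y1 ω) ∂μ = μ.real {ω | D0 ω < D1 ω ∧ Y0 ω < Y1 ω} := by
    simpa only [one_mul, setIntegral_const, smul_eq_mul, mul_one]
      using supercomplier_integral (integrable_const (1 : ℝ))
  rw [supercomplier_integral hint, supercomplier_share]
  rfl

theorem supercomplier_characteristics_wald
{Ω : Type} [MeasurableSpace Ω] (μ : Measure Ω) [IsProbabilityMeasure μ]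
    (Z D0 D1 Y0 Y1 D Y : Ω → ℝ)
    (hZm : Measurable Z) (hD0m : Measurable D0) (hD1m : Measurable D1)
    (hY0m : Measurable Y0) (hY1m : Measurable Y1)
    (hZbin : ∀ ω, Z ω = 0 ∨ Z ω = 1)
    (hD0bin : ∀ ω, D0 ω = 0 ∨ D0 ω = 1)
    (hD1bin : ∀ ω, D1 ω = 0 ∨ D1 ω = 1)
    (hY0bin : ∀ ω, Y0 ω = 0 ∨ Y0 ω = 1)
    (hY1bin : ∀ ω, Y1 ω = 0 ∨ Y1 ω = 1)
    (hD : ∀ ω, D ω = Z ω * D1 ω + (1 - Z ω) * D0 ω)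
    (hY : ∀ ω, Y ω = D ω * Y1 ω + (1 - D ω) * Y0 ω)
    (hz0 : 0 < μ {ω | Z ω = 1}) (hz1 : μ {ω | Z ω = 1} < 1)
    (hmonoD : ∀ᵐ ω ∂μ, D0 ω ≤ D1 ω)
    (X : Ω → ℝ) (hXm : Measurable X) (h : ℝ → ℝ) (hhm : Measurable h)
    (hint : Integrable (fun ω => h (X ω)) μ)
    (hindep : IndepFun (fun ω => (X ω, Y0 ω, Y1 ω, D0 ω, D1 ω)) Z μ)
    (hmonoY : ∀ᵐ ω ∂μ, Y0 ω ≤ Y1 ω)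
    (hcc : 0 < μ {ω | D0 ω < D1 ω ∧ Y0 ω < Y1 ω}) :
    cmean μ (fun ω => h (X ω)) {ω | D0 ω < D1 ω ∧ Y0 ω < Y1 ω}
      = (cmean μ (fun ω => h (X ω) * Y ω) {ω | Z ω = 1}
          - cmean μ (fun ω => h (X ω) * Y ω) {ω | Z ω = 0})
        / (cmean μ Y {ω | Z ω = 1} - cmean μ Y {ω | Z ω = 0}) :=
  supercomplier_characteristics_wald_general μ Z D0 D1 Y0 Y1 D Y hZm hD0m hD1m hY0m hY1m hZbin
    hD0bin hD1bin hY0bin hY1bin hD hY hz0 hz1 hmonoD X hXm h hhm hint hindep hmonoY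
end

section
/- With κ, κ0, κ1 as defined and π = κ − (κ0·Y + κ1·(1−Y)), for any integrable h(X), E[π·h(X)] = E[h(X)Y | Z=1] − E[h(X)Y | Z=0], under independence of (X, Y0, Y1, D0, D1) from Z. -/
/-!
Writing `p = P(Z = 1)` and `q = P(Z = 0)`, the terms in `D` cancel from `π`, leaving
`π = 1 - Z / p + (Z / p - (1 - Z) / q) * Y`. Since `h(X)` is independent of `Z`,
`E[(1 - Z / p) h(X)] = 0`, and the inverse-probability weights turn
`E[(Z / p - (1 - Z) / q) h(X) Y]` into the difference of the two conditional means.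
-/

open MeasureTheory ProbabilityTheory

lemma mul_add_one_sub_mul_eq_zero_or_eq_one {R : Type*} [Ring R] {c a b : R}
    (hc : c = 0 ∨ c = 1) (ha : a = 0 ∨ a = 1) (hb : b = 0 ∨ b = 1) :
    c * a + (1 - c) * b = 0 ∨ c * a + (1 - c) * b = 1 := by
  rcases hc with rfl | rfl <;> simpa

lemma ProbabilityTheory.IndepFun.setIntegral_preimage_eq_measureReal_mul_integral
    {Ω β : Type*} [MeasurableSpace Ω] [MeasurableSpace β] {μ : Measure Ω}
    {f : Ω → ℝ} {Z : Ω → β} (hfZ : IndepFun f Z μ) (hf : AEStronglyMeasurable f μ)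
    (hZ : Measurable Z) {B : Set β} (hB : MeasurableSet B) :
    ∫ ω in Z ⁻¹' B, f ω ∂μ = μ.real (Z ⁻¹' B) * ∫ ω, f ω ∂μ := by
  have hind : IndepFun (B.indicator (1 : β → ℝ) ∘ Z) f μ :=
    hfZ.symm.comp (ψ := id) (measurable_one.indicator hB) measurable_id
  have hone : (B.indicator (1 : β → ℝ) ∘ Z) = (Z ⁻¹' B).indicator 1 := by
    ext ω; by_cases hω : Z ω ∈ B <;> simp [hω]
  rw [← integral_indicator (hZ hB), ← integral_indicator_one (hZ hB), ← hone,
    ← hind.integral_fun_mul_eq_mul_integral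
      ((measurable_one.indicator hB).comp hZ).aestronglyMeasurable hf, hone]
  simp only [← Set.indicator_mul_left, Pi.one_apply, one_mul]

section Binary

variable {Ω : Type*} {mΩ : MeasurableSpace Ω} {μ : Measure Ω} {Z f : Ω → ℝ}

lemma MeasureTheory.Integrable.comp_mul_of_eq_zero_or_eq_one (hf : Integrable f μ)
    (hZm : Measurable Z) (hZ : ∀ ω, Z ω = 0 ∨ Z ω = 1) {w : ℝ → ℝ} (hw : Measurable w) :
    Integrable (fun ω => w (Z ω) * f ω) μ := by
  refine hf.bdd_mul (c := |w 0| + |w 1|) (hw.comp hZm).aestronglyMeasurable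
    (ae_of_all _ fun ω => ?_)
  rcases hZ ω with h | h <;> simp [h]

lemma setIntegral_setOf_eq_one_eq_integral_mul (hZm : Measurable Z)
    (hZ : ∀ ω, Z ω = 0 ∨ Z ω = 1) :
    ∫ ω in {ω | Z ω = 1}, f ω ∂μ = ∫ ω, Z ω * f ω ∂μ := by
  have hs : MeasurableSet {ω | Z ω = 1} := hZm (measurableSet_singleton 1)
  rw [← integral_indicator hs]
  congr 1 with ω
  rcases hZ ω with h | h <;> simp [h]

lemma setIntegral_setOf_eq_zero_eq_integral_one_sub_mul (hZm : Measurable Z)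
    (hZ : ∀ ω, Z ω = 0 ∨ Z ω = 1) :
    ∫ ω in {ω | Z ω = 0}, f ω ∂μ = ∫ ω, (1 - Z ω) * f ω ∂μ := by
  have hs : MeasurableSet {ω | Z ω = 0} := hZm (measurableSet_singleton 0)
  rw [← integral_indicator hs]
  congr 1 with ω
  rcases hZ ω with h | h <;> simp [h]

lemma integral_one_sub_div_measureReal_mul_eq_zero (hfZ : IndepFun f Z μ)
    (hf : Integrable f μ) (hZm : Measurable Z) (hZ : ∀ ω, Z ω = 0 ∨ Z ω = 1)
    (hp : μ.real {ω | Z ω = 1} ≠ 0) :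
    ∫ ω, (1 - Z ω / μ.real {ω | Z ω = 1}) * f ω ∂μ = 0 := by
  set p := μ.real {ω | Z ω = 1}
  have hZf : ∫ ω, Z ω * f ω ∂μ = p * ∫ ω, f ω ∂μ := by
    rw [← setIntegral_setOf_eq_one_eq_integral_mul hZm hZ]
    exact hfZ.setIntegral_preimage_eq_measureReal_mul_integral hf.aestronglyMeasurable hZm
      (measurableSet_singleton 1)
  calc ∫ ω, (1 - Z ω / p) * f ω ∂μ = ∫ ω, f ω ∂μ - p⁻¹ * ∫ ω, Z ω * f ω ∂μ := by
        rw [← integral_const_mul, ← integral_sub hf]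
        · congr 1 with ω
          ring
        · exact (hf.comp_mul_of_eq_zero_or_eq_one hZm hZ measurable_id).const_mul _
    _ = 0 := by rw [hZf, inv_mul_cancel_left₀ hp, sub_self]

end Binary

lemma integral_ipw_mul_eq_cmean_sub_cmean {Ω : Type} [MeasurableSpace Ω] {μ : Measure Ω}
    {Z g : Ω → ℝ} (hg : Integrable g μ) (hZm : Measurable Z) (hZ : ∀ ω, Z ω = 0 ∨ Z ω = 1) :
    ∫ ω, (Z ω / μ.real {ω | Z ω = 1} - (1 - Z ω) / μ.real {ω | Z ω = 0}) * g ω ∂μ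
      = cmean μ g {ω | Z ω = 1} - cmean μ g {ω | Z ω = 0} := by
  rw [cmean, cmean, setIntegral_setOf_eq_one_eq_integral_mul hZm hZ,
    setIntegral_setOf_eq_zero_eq_integral_one_sub_mul hZm hZ, ← measureReal_def,
    ← measureReal_def, ← integral_div, ← integral_div, ← integral_sub]
  · congr 1 with ω
    ring
  · exact (hg.comp_mul_of_eq_zero_or_eq_one hZm hZ measurable_id).div_const _
  · exact (hg.comp_mul_of_eq_zero_or_eq_one hZm hZ (w := fun z => 1 - z)
      (by fun_prop)).div_const _

theorem pi_weight_identity_general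
    {Ω : Type} [MeasurableSpace Ω] (μ : Measure Ω) [IsProbabilityMeasure μ]
    (Z D0 D1 Y0 Y1 D Y X : Ω → ℝ)
    (hZm : Measurable Z) (hD0m : Measurable D0) (hD1m : Measurable D1)
    (hY0m : Measurable Y0) (hY1m : Measurable Y1)
    (hZbin : ∀ ω, Z ω = 0 ∨ Z ω = 1)
    (hD0bin : ∀ ω, D0 ω = 0 ∨ D0 ω = 1)
    (hD1bin : ∀ ω, D1 ω = 0 ∨ D1 ω = 1)
    (hY0bin : ∀ ω, Y0 ω = 0 ∨ Y0 ω = 1)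
    (hY1bin : ∀ ω, Y1 ω = 0 ∨ Y1 ω = 1)
    (hD : ∀ ω, D ω = Z ω * D1 ω + (1 - Z ω) * D0 ω)
    (hY : ∀ ω, Y ω = D ω * Y1 ω + (1 - D ω) * Y0 ω)
    (hindep : IndepFun (fun ω => (X ω, Y0 ω, Y1 ω, D0 ω, D1 ω)) Z μ)
    (hz0 : 0 < μ {ω | Z ω = 1})
    (κ κ0 κ1 π : Ω → ℝ)
    (hκ : ∀ ω, κ ω = 1 - D ω * (1 - Z ω) / (μ {ω' | Z ω' = 0}).toReal
        - (1 - D ω) * Z ω / (μ {ω' | Z ω' = 1}).toReal)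
    (hκ0 : ∀ ω, κ0 ω = (1 - D ω) * (1 - Z ω) / (μ {ω' | Z ω' = 0}).toReal
        - (1 - D ω) * Z ω / (μ {ω' | Z ω' = 1}).toReal)
    (hκ1 : ∀ ω, κ1 ω = D ω * Z ω / (μ {ω' | Z ω' = 1}).toReal
        - D ω * (1 - Z ω) / (μ {ω' | Z ω' = 0}).toReal)
    (hπ : ∀ ω, π ω = κ ω - (κ0 ω * Y ω + κ1 ω * (1 - Y ω)))
    (h : ℝ → ℝ) (hhm : Measurable h)
    (hint : Integrable (fun ω => h (X ω)) μ) :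
    (∫ ω, π ω * h (X ω) ∂μ)
      = cmean μ (fun ω => h (X ω) * Y ω) {ω | Z ω = 1}
        - cmean μ (fun ω => h (X ω) * Y ω) {ω | Z ω = 0} := by
  have hDbin : ∀ ω, D ω = 0 ∨ D ω = 1 := fun ω => hD ω ▸
    mul_add_one_sub_mul_eq_zero_or_eq_one (hZbin ω) (hD1bin ω) (hD0bin ω)
  have hYbin : ∀ ω, Y ω = 0 ∨ Y ω = 1 := fun ω => hY ω ▸
    mul_add_one_sub_mul_eq_zero_or_eq_one (hDbin ω) (hY1bin ω) (hY0bin ω)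
  have hYm : Measurable Y := by
    rw [funext hY, funext hD]
    fun_prop
  have hhXY : Integrable (fun ω => h (X ω) * Y ω) μ :=
    hint.mul_bdd hYm.aestronglyMeasurable (c := 1) <| ae_of_all _ fun ω => by
      rcases hYbin ω with hω | hω <;> simp [hω]
  have hhXZ : IndepFun (fun ω => h (X ω)) Z μ :=
    hindep.comp (φ := fun v : ℝ × ℝ × ℝ × ℝ × ℝ => h v.1) (ψ := id)
      (hhm.comp measurable_fst) measurable_id
  have hp : μ.real {ω | Z ω = 1} ≠ 0 :=
    (ENNReal.toReal_pos hz0.ne' (measure_ne_top _ _)).ne'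
  simp only [← measureReal_def] at hκ hκ0 hκ1
  set p := μ.real {ω | Z ω = 1}
  set q := μ.real {ω | Z ω = 0}
  have hweight : ∀ ω, π ω * h (X ω)
      = (1 - Z ω / p) * h (X ω) + (Z ω / p - (1 - Z ω) / q) * (h (X ω) * Y ω) := by
    intro ω
    rw [hπ, hκ, hκ0, hκ1]
    ring
  rw [integral_congr_ae (ae_of_all _ hweight), integral_add,
    integral_one_sub_div_measureReal_mul_eq_zero hhXZ hint hZm hZbin hp,
    integral_ipw_mul_eq_cmean_sub_cmean hhXY hZm hZbin, zero_add]
  · exact hint.comp_mul_of_eq_zero_or_eq_one hZm hZbin (w := fun z => 1 - z / p) (by fun_prop)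
  · exact hhXY.comp_mul_of_eq_zero_or_eq_one hZm hZbin
      (w := fun z => z / p - (1 - z) / q) (by fun_prop)

theorem pi_weight_identity
    {Ω : Type} [MeasurableSpace Ω] (μ : Measure Ω) [IsProbabilityMeasure μ]
    (Z D0 D1 Y0 Y1 D Y X : Ω → ℝ)
    (hZm : Measurable Z) (hD0m : Measurable D0) (hD1m : Measurable D1)
    (hY0m : Measurable Y0) (hY1m : Measurable Y1) (hXm : Measurable X)
    (hZbin : ∀ ω, Z ω = 0 ∨ Z ω = 1)
    (hD0bin : ∀ ω, D0 ω = 0 ∨ D0 ω = 1)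
    (hD1bin : ∀ ω, D1 ω = 0 ∨ D1 ω = 1)
    (hY0bin : ∀ ω, Y0 ω = 0 ∨ Y0 ω = 1)
    (hY1bin : ∀ ω, Y1 ω = 0 ∨ Y1 ω = 1)
    (hD : ∀ ω, D ω = Z ω * D1 ω + (1 - Z ω) * D0 ω)
    (hY : ∀ ω, Y ω = D ω * Y1 ω + (1 - D ω) * Y0 ω)
    (hindep : IndepFun (fun ω => (X ω, Y0 ω, Y1 ω, D0 ω, D1 ω)) Z μ)
    (hz0 : 0 < μ {ω | Z ω = 1}) (hz1 : μ {ω | Z ω = 1} < 1)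
    (κ κ0 κ1 π : Ω → ℝ)
    (hκ : ∀ ω, κ ω = 1 - D ω * (1 - Z ω) / (μ {ω' | Z ω' = 0}).toReal
        - (1 - D ω) * Z ω / (μ {ω' | Z ω' = 1}).toReal)
    (hκ0 : ∀ ω, κ0 ω = (1 - D ω) * (1 - Z ω) / (μ {ω' | Z ω' = 0}).toReal
        - (1 - D ω) * Z ω / (μ {ω' | Z ω' = 1}).toReal)
    (hκ1 : ∀ ω, κ1 ω = D ω * Z ω / (μ {ω' | Z ω' = 1}).toReal
        - D ω * (1 - Z ω) / (μ {ω' | Z ω' = 0}).toReal)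
    (hπ : ∀ ω, π ω = κ ω - (κ0 ω * Y ω + κ1 ω * (1 - Y ω)))
    (h : ℝ → ℝ) (hhm : Measurable h)
    (hint : Integrable (fun ω => h (X ω)) μ) :
    (∫ ω, π ω * h (X ω) ∂μ)
      = cmean μ (fun ω => h (X ω) * Y ω) {ω | Z ω = 1}
        - cmean μ (fun ω => h (X ω) * Y ω) {ω | Z ω = 0} :=
  pi_weight_identity_general μ Z D0 D1 Y0 Y1 D Y X hZm hD0m hD1m hY0m hY1m hZbin hD0bin hD1bin
    hY0bin hY1bin hD hY hindep hz0 κ κ0 κ1 π hκ hκ0 hκ1 hπ h hhm hint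
end

section
/- Under random assignment, exclusion, treatment monotonicity, and outcome monotonicity with binary Y, the following three inequalities hold: (i) Pr(Y=0, D=1 | Z=1) ≥ Pr(Y=0, D=1 | Z=0); (ii) Pr(Y=1, D=0 | Z=0) ≥ Pr(Y=1, D=0 | Z=1); (iii) Pr(Y=1 | Z=1) ≥ Pr(Y=1 | Z=0). -/
/-!
Write `W = (Y0, Y1, D0, D1)`. Exclusion makes the observed pair `(Y, D)` on `{Z = z}` a fixed
function `instrumentResponse z` of `W`, and random assignment then turns each conditional
probability given `Z = z` into the unconditional probability of the corresponding event about `W`.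
Each inequality thus reduces to a pointwise implication between events about `W` under `z = 0`
and `z = 1`, which is where the two monotonicity assumptions enter.
-/

open MeasureTheory ProbabilityTheory

/-- Conditional probability of event `s` given event `t`. -/
noncomputable def cprob {Ω : Type} [MeasurableSpace Ω] (μ : Measure Ω)
    (s t : Set Ω) : ℝ :=
  (μ (s ∩ t)).toReal / (μ t).toReal

section Independence

variable {Ω : Type} {α β γ : Type*} [MeasurableSpace Ω] [MeasurableSpace α] [MeasurableSpace β]
  [MeasurableSingletonClass β] [MeasurableSpace γ] {μ : Measure Ω} [IsFiniteMeasure μ]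
  {W : Ω → α} {Z : Ω → β} {X : Ω → γ} {g : β → α → γ} {B : Set γ}

theorem cprob_preimage_eq_of_indepFun (hindep : IndepFun W Z μ)
    (hX : ∀ ω, X ω = g (Z ω) (W ω)) {z : β} (hg : Measurable (g z)) (hz : μ (Z ⁻¹' {z}) ≠ 0)
    (hB : MeasurableSet B) :
    cprob μ (X ⁻¹' B) (Z ⁻¹' {z}) = μ.real ((fun ω ↦ g z (W ω)) ⁻¹' B) := by
  have hslice : X ⁻¹' B ∩ Z ⁻¹' {z} = W ⁻¹' (g z ⁻¹' B) ∩ Z ⁻¹' {z} := by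
    ext ω
    simp +contextual only [Set.mem_inter_iff, Set.mem_preimage, Set.mem_singleton_iff, hX,
      and_congr_left_iff, implies_true]
  rw [cprob, hslice, hindep.measure_inter_preimage_eq_mul _ _ (hg hB) (measurableSet_singleton z),
    ENNReal.toReal_mul, mul_div_assoc,
    div_self (ENNReal.toReal_ne_zero.mpr ⟨hz, measure_ne_top μ _⟩), mul_one]
  rfl

theorem cprob_preimage_le_of_indepFun (hindep : IndepFun W Z μ)
    (hX : ∀ ω, X ω = g (Z ω) (W ω)) (hg : ∀ z, Measurable (g z)) {z z' : β}
    (hz : μ (Z ⁻¹' {z}) ≠ 0) (hz' : μ (Z ⁻¹' {z'}) ≠ 0) (hB : MeasurableSet B)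
    (hle : ∀ᵐ ω ∂μ, g z (W ω) ∈ B → g z' (W ω) ∈ B) :
    cprob μ (X ⁻¹' B) (Z ⁻¹' {z}) ≤ cprob μ (X ⁻¹' B) (Z ⁻¹' {z'}) := by
  rw [cprob_preimage_eq_of_indepFun hindep hX (hg z) hz hB,
    cprob_preimage_eq_of_indepFun hindep hX (hg z') hz' hB]
  exact ENNReal.toReal_mono (measure_ne_top μ _) (measure_mono_ae hle)

end Independence

theorem measure_compl_ne_zero_of_lt_one {Ω : Type*} [MeasurableSpace Ω] {μ : Measure Ω}
    [IsProbabilityMeasure μ] {s : Set Ω} (hs : μ s < 1) : μ sᶜ ≠ 0 := by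
  intro h
  have := measure_univ_le_add_compl (μ := μ) s
  rw [h, add_zero, measure_univ] at this
  exact hs.not_ge this

/-- The observed `(Y, D)` under instrument value `z`, for `w = (Y0, Y1, D0, D1)`. -/
def instrumentResponse (z : ℝ) (w : ℝ × ℝ × ℝ × ℝ) : ℝ × ℝ :=
  let d := z * w.2.2.2 + (1 - z) * w.2.2.1
  (d * w.2.1 + (1 - d) * w.1, d)

theorem measurable_instrumentResponse (z : ℝ) : Measurable (instrumentResponse z) := by
  unfold instrumentResponse
  fun_prop

@[simp]
theorem instrumentResponse_zero (y₀ y₁ d₀ d₁ : ℝ) :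
    instrumentResponse 0 (y₀, y₁, d₀, d₁) = (d₀ * y₁ + (1 - d₀) * y₀, d₀) := by
  simp [instrumentResponse]

@[simp]
theorem instrumentResponse_one (y₀ y₁ d₀ d₁ : ℝ) :
    instrumentResponse 1 (y₀, y₁, d₀, d₁) = (d₁ * y₁ + (1 - d₁) * y₀, d₁) := by
  simp [instrumentResponse]

section Monotonicity

variable {y₀ y₁ d₀ d₁ : ℝ}

theorem instrumentResponse_one_eq_zero_one (hd₁ : d₁ = 0 ∨ d₁ = 1) (hd : d₀ ≤ d₁)
    (h : (instrumentResponse 0 (y₀, y₁, d₀, d₁)).1 = 0 ∧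
      (instrumentResponse 0 (y₀, y₁, d₀, d₁)).2 = 1) :
    (instrumentResponse 1 (y₀, y₁, d₀, d₁)).1 = 0 ∧
      (instrumentResponse 1 (y₀, y₁, d₀, d₁)).2 = 1 := by
  simp only [instrumentResponse_zero, instrumentResponse_one] at h ⊢
  obtain ⟨hy, rfl⟩ := h
  rcases hd₁ with rfl | rfl
  · norm_num at hd
  · simpa using hy

theorem instrumentResponse_zero_eq_one_zero (hd₀ : d₀ = 0 ∨ d₀ = 1) (hd : d₀ ≤ d₁)
    (h : (instrumentResponse 1 (y₀, y₁, d₀, d₁)).1 = 1 ∧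
      (instrumentResponse 1 (y₀, y₁, d₀, d₁)).2 = 0) :
    (instrumentResponse 0 (y₀, y₁, d₀, d₁)).1 = 1 ∧
      (instrumentResponse 0 (y₀, y₁, d₀, d₁)).2 = 0 := by
  simp only [instrumentResponse_zero, instrumentResponse_one] at h ⊢
  obtain ⟨hy, rfl⟩ := h
  rcases hd₀ with rfl | rfl
  · simpa using hy
  · norm_num at hd

theorem instrumentResponse_one_fst_eq_one (hy₁ : y₁ = 0 ∨ y₁ = 1) (hd₀ : d₀ = 0 ∨ d₀ = 1)
    (hd₁ : d₁ = 0 ∨ d₁ = 1) (hd : d₀ ≤ d₁) (hy : y₀ ≤ y₁)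
    (h : (instrumentResponse 0 (y₀, y₁, d₀, d₁)).1 = 1) :
    (instrumentResponse 1 (y₀, y₁, d₀, d₁)).1 = 1 := by
  simp only [instrumentResponse_zero, instrumentResponse_one] at h ⊢
  rcases hd₀ with rfl | rfl <;> rcases hd₁ with rfl | rfl
  · simpa using h
  · norm_num at h ⊢
    rcases hy₁ with rfl | rfl <;> linarith
  · norm_num at hd
  · simpa using h

end Monotonicity

theorem testable_implications_general
    {Ω : Type} [MeasurableSpace Ω] (μ : Measure Ω) [IsProbabilityMeasure μ]
    (Z D0 D1 Y0 Y1 D Y : Ω → ℝ)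
    (hZbin : ∀ ω, Z ω = 0 ∨ Z ω = 1)
    (hD0bin : ∀ ω, D0 ω = 0 ∨ D0 ω = 1)
    (hD1bin : ∀ ω, D1 ω = 0 ∨ D1 ω = 1)
    (hY1bin : ∀ ω, Y1 ω = 0 ∨ Y1 ω = 1)
    (hD : ∀ ω, D ω = Z ω * D1 ω + (1 - Z ω) * D0 ω)
    (hY : ∀ ω, Y ω = D ω * Y1 ω + (1 - D ω) * Y0 ω)
    (hindep : IndepFun (fun ω => (Y0 ω, Y1 ω, D0 ω, D1 ω)) Z μ)
    (hz0 : 0 < μ {ω | Z ω = 1}) (hz1 : μ {ω | Z ω = 1} < 1)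
    (hmonoD : ∀ᵐ ω ∂μ, D0 ω ≤ D1 ω)
    (hmonoY : ∀ᵐ ω ∂μ, Y0 ω ≤ Y1 ω) :
    cprob μ {ω | Y ω = 0 ∧ D ω = 1} {ω | Z ω = 1}
        ≥ cprob μ {ω | Y ω = 0 ∧ D ω = 1} {ω | Z ω = 0}
    ∧ cprob μ {ω | Y ω = 1 ∧ D ω = 0} {ω | Z ω = 0}
        ≥ cprob μ {ω | Y ω = 1 ∧ D ω = 0} {ω | Z ω = 1}
    ∧ cprob μ {ω | Y ω = 1} {ω | Z ω = 1}
        ≥ cprob μ {ω | Y ω = 1} {ω | Z ω = 0} := by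
  have hobs : ∀ ω, (Y ω, D ω) = instrumentResponse (Z ω) (Y0 ω, Y1 ω, D0 ω, D1 ω) := by
    intro ω
    simp only [instrumentResponse, hY ω, hD ω]
  have hZ0 : μ {ω | Z ω = 0} ≠ 0 := by
    have hcompl : {ω | Z ω = 0} = {ω | Z ω = 1}ᶜ := by
      ext ω
      rcases hZbin ω with h | h <;> simp [h]
    exact hcompl ▸ measure_compl_ne_zero_of_lt_one hz1
  have hcomp {z z' : ℝ} (B : Set (ℝ × ℝ)) :=
    cprob_preimage_le_of_indepFun (z := z) (z' := z') (B := B) hindep hobs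
      measurable_instrumentResponse
  refine ⟨hcomp {q | q.1 = 0 ∧ q.2 = 1} hZ0 hz0.ne' (by measurability) ?_,
    hcomp {q | q.1 = 1 ∧ q.2 = 0} hz0.ne' hZ0 (by measurability) ?_,
    hcomp {q | q.1 = 1} hZ0 hz0.ne' (by measurability) ?_⟩
  · filter_upwards [hmonoD] with ω hd
    exact instrumentResponse_one_eq_zero_one (hD1bin ω) hd
  · filter_upwards [hmonoD] with ω hd
    exact instrumentResponse_zero_eq_one_zero (hD0bin ω) hd
  · filter_upwards [hmonoD, hmonoY] with ω hd hy
    exact instrumentResponse_one_fst_eq_one (hY1bin ω) (hD0bin ω) (hD1bin ω) hd hy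

theorem testable_implications
    {Ω : Type} [MeasurableSpace Ω] (μ : Measure Ω) [IsProbabilityMeasure μ]
    (Z D0 D1 Y0 Y1 D Y : Ω → ℝ)
    (hZm : Measurable Z) (hD0m : Measurable D0) (hD1m : Measurable D1)
    (hY0m : Measurable Y0) (hY1m : Measurable Y1)
    (hZbin : ∀ ω, Z ω = 0 ∨ Z ω = 1)
    (hD0bin : ∀ ω, D0 ω = 0 ∨ D0 ω = 1)
    (hD1bin : ∀ ω, D1 ω = 0 ∨ D1 ω = 1)
    (hY0bin : ∀ ω, Y0 ω = 0 ∨ Y0 ω = 1)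
    (hY1bin : ∀ ω, Y1 ω = 0 ∨ Y1 ω = 1)
    (hD : ∀ ω, D ω = Z ω * D1 ω + (1 - Z ω) * D0 ω)
    (hY : ∀ ω, Y ω = D ω * Y1 ω + (1 - D ω) * Y0 ω)
    (hindep : IndepFun (fun ω => (Y0 ω, Y1 ω, D0 ω, D1 ω)) Z μ)
    (hz0 : 0 < μ {ω | Z ω = 1}) (hz1 : μ {ω | Z ω = 1} < 1)
    (hmonoD : ∀ᵐ ω ∂μ, D0 ω ≤ D1 ω)
    (hmonoY : ∀ᵐ ω ∂μ, Y0 ω ≤ Y1 ω) :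
    cprob μ {ω | Y ω = 0 ∧ D ω = 1} {ω | Z ω = 1}
        ≥ cprob μ {ω | Y ω = 0 ∧ D ω = 1} {ω | Z ω = 0}
    ∧ cprob μ {ω | Y ω = 1 ∧ D ω = 0} {ω | Z ω = 0}
        ≥ cprob μ {ω | Y ω = 1 ∧ D ω = 0} {ω | Z ω = 1}
    ∧ cprob μ {ω | Y ω = 1} {ω | Z ω = 1}
        ≥ cprob μ {ω | Y ω = 1} {ω | Z ω = 0} :=
  testable_implications_general μ Z D0 D1 Y0 Y1 D Y hZbin hD0bin hD1bin hY1bin hD hY hindep hz0 hz1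
    hmonoD hmonoY
end

section
/- Sharpness of the testable implications: given any joint distribution of observables (Y, D, Z) with Y, D, Z binary and 0 < P(Z=1) < 1 satisfying Pr(Y=0,D=1|Z=1) ≥ Pr(Y=0,D=1|Z=0), Pr(Y=1,D=0|Z=0) ≥ Pr(Y=1,D=0|Z=1), and Pr(Y=1|Z=1) ≥ Pr(Y=1|Z=0), there exists a joint distribution of (Y1, Y0, D1, D0, Z) satisfying random assignment, treatment monotonicity (P(D1 ≥ D0)=1), and outcome monotonicity (P(Y1 ≥ Y0)=1) whose induced observed distribution of (D, Y, Z) with D = Z·D1+(1−Z)·D0 and Y = D·Y1+(1−D)·Y0 matches the given (Y, D, Z) distribution. -/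
/-!
Write `q z y d = P(Y = y, D = d | Z = z)`. A latent unit is a treatment type (never-taker,
complier, always-taker) paired with an outcome type (`Y(d) = 0`, `Y(d) = d`, `Y(d) = 1`), so both
monotonicity constraints hold by construction, and `Z` is drawn independently with its observed
law. In the arm `Z = 0` only always-takers are treated and in the arm `Z = 1` only never-takers
are untreated; this fixes the masses of these two types together with their outcomes. The rest
of the mass goes to compliers, split over the three outcome types with weights equal to
differences between the two arms of observed probabilities. These differences are exactly the
quantities the testable implications assert to be nonnegative, and with these weights every
conditional law of `(Y, D)` given `Z` is reproduced.
-/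

open MeasureTheory ProbabilityTheory

/-- Coordinates of the latent space `(Y₁, Y₀, D₁, D₀, Z)`. -/
noncomputable abbrev lY1 (q : ℝ × ℝ × ℝ × ℝ × ℝ) : ℝ := q.1
noncomputable abbrev lY0 (q : ℝ × ℝ × ℝ × ℝ × ℝ) : ℝ := q.2.1
noncomputable abbrev lD1 (q : ℝ × ℝ × ℝ × ℝ × ℝ) : ℝ := q.2.2.1
noncomputable abbrev lD0 (q : ℝ × ℝ × ℝ × ℝ × ℝ) : ℝ := q.2.2.2.1
noncomputable abbrev lZ (q : ℝ × ℝ × ℝ × ℝ × ℝ) : ℝ := q.2.2.2.2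

/-- Observed treatment induced by the latent variables. -/
noncomputable def lD (q : ℝ × ℝ × ℝ × ℝ × ℝ) : ℝ :=
  lZ q * lD1 q + (1 - lZ q) * lD0 q

/-- Observed (Y, D, Z) induced by the latent variables. -/
noncomputable def obsMap (q : ℝ × ℝ × ℝ × ℝ × ℝ) : ℝ × ℝ × ℝ :=
  (lD q * lY1 q + (1 - lD q) * lY0 q, lD q, lZ q)

open Set Finset
open scoped ENNReal

namespace Bool

def toReal : Bool → ℝ
  | false => 0
  | true => 1

@[simp] lemma toReal_false : false.toReal = 0 := rfl

@[simp] lemma toReal_true : true.toReal = 1 := rfl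

lemma toReal_injective : Function.Injective toReal := by
  intro a b h
  cases a <;> cases b <;> simp_all

@[simp] lemma toReal_inj {a b : Bool} : a.toReal = b.toReal ↔ a = b :=
  toReal_injective.eq_iff

@[simp] lemma toReal_eq_zero {b : Bool} : b.toReal = 0 ↔ b = false := by
  cases b <;> simp

@[simp] lemma toReal_eq_one {b : Bool} : b.toReal = 1 ↔ b = true := by
  cases b <;> simp

lemma toReal_eq_zero_or_eq_one (b : Bool) : b.toReal = 0 ∨ b.toReal = 1 := by
  cases b <;> simp

lemma toReal_mono : Monotone toReal := by
  intro a b h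
  cases a <;> cases b <;> simp_all [Bool.le_iff_imp]

lemma mem_range_toReal {x : ℝ} (hx : x = 0 ∨ x = 1) : x ∈ Set.range toReal := by
  rcases hx with rfl | rfl
  exacts [⟨false, rfl⟩, ⟨true, rfl⟩]

lemma toReal_mul_add_one_sub_mul (b : Bool) (f : Bool → Bool) :
    b.toReal * (f true).toReal + (1 - b.toReal) * (f false).toReal = (f b).toReal := by
  cases b <;> simp

end Bool

section FiniteSupport

variable {α β : Type*} [MeasurableSpace α] [MeasurableSingletonClass α] [Fintype β]
  {μ ν : Measure α} {f : β → α}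

open Classical in
lemma measure_eq_sum_of_ae_mem_range (hf : f.Injective) (hμ : ∀ᵐ x ∂μ, x ∈ range f)
    (A : Set α) : μ A = ∑ b with f b ∈ A, μ {f b} := by
  have hA : A ∩ range f = ↑((univ.filter fun b => f b ∈ A).image f) := by
    ext x
    aesop
  have hAμ : (A ∩ range f : Set α) =ᵐ[μ] A :=
    inter_ae_eq_left_of_ae_eq_univ (Filter.eventuallyEq_univ.2 hμ)
  rw [← measure_congr hAμ, hA, ← sum_measure_singleton, sum_image hf.injOn]

lemma MeasureTheory.Measure.ext_of_ae_mem_range (hf : f.Injective)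
    (hμ : ∀ᵐ x ∂μ, x ∈ range f) (hν : ∀ᵐ x ∂ν, x ∈ range f)
    (h : ∀ b, μ {f b} = ν {f b}) : μ = ν :=
  Measure.ext fun A _ => by
    rw [measure_eq_sum_of_ae_mem_range hf hμ, measure_eq_sum_of_ae_mem_range hf hν]
    exact Finset.sum_congr rfl fun b _ => h b

lemma ae_map_of_forall {γ : Type*} [MeasurableSpace γ] [Finite γ] {P : Measure γ}
    {g : γ → α} {p : α → Prop} (h : ∀ c, p (g c)) : ∀ᵐ x ∂P.map g, p x :=
  (ae_map_mem_range g (Set.finite_range g).measurableSet P).mono fun _ ⟨c, hc⟩ => hc ▸ h c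

end FiniteSupport

open Classical in
lemma MeasureTheory.Measure.finset_sum_smul_dirac_apply {α : Type*} [MeasurableSpace α]
    [DiscreteMeasurableSpace α] (s : Finset α) (c : α → ℝ≥0∞) (A : Set α) :
    (∑ x ∈ s, c x • Measure.dirac x) A = ∑ x ∈ s with x ∈ A, c x := by
  simp [Measure.dirac_apply' _ (MeasurableSet.of_discrete), sum_filter, Set.indicator_apply]

lemma indepFun_map_of_comp {Ω Ω' β γ : Type*} [MeasurableSpace Ω] [MeasurableSpace Ω']
    [MeasurableSpace β] [MeasurableSpace γ] {P : Measure Ω'} {E : Ω' → Ω} {X : Ω → β}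
    {Y : Ω → γ} (hE : Measurable E) (hX : Measurable X) (hY : Measurable Y)
    (h : (X ∘ E) ⟂ᵢ[P] (Y ∘ E)) : X ⟂ᵢ[P.map E] Y := by
  rw [indepFun_iff_measure_inter_preimage_eq_mul] at h ⊢
  intro s t hs ht
  rw [Measure.map_apply hE ((hX hs).inter (hY ht)), Measure.map_apply hE (hX hs),
    Measure.map_apply hE (hY ht)]
  exact h s t hs ht

lemma ofReal_cprob_mul {Ω : Type} [MeasurableSpace Ω] (μ : Measure Ω) [IsFiniteMeasure μ]
    (s t : Set Ω) (ht : μ t ≠ 0) : ENNReal.ofReal (cprob μ s t) * μ t = μ (s ∩ t) := by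
  rw [cprob, ENNReal.ofReal_div_of_pos (ENNReal.toReal_pos ht (measure_ne_top μ t)),
    ENNReal.ofReal_toReal (measure_ne_top μ _), ENNReal.ofReal_toReal (measure_ne_top μ t),
    ENNReal.div_mul_cancel ht (measure_ne_top μ t)]

inductive TreatmentType
  | never
  | complier
  | always
  deriving DecidableEq

inductive OutcomeType
  | never
  | helped
  | always
  deriving DecidableEq

namespace TreatmentType

instance : Fintype TreatmentType :=
  ⟨{never, complier, always}, fun c => by cases c <;> decide⟩

lemma sum_univ {M : Type*} [AddCommMonoid M] (f : TreatmentType → M) :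
    ∑ c, f c = f never + f complier + f always := by
  rw [show (Finset.univ : Finset TreatmentType) = {never, complier, always} from rfl,
    Finset.sum_insert (by decide), Finset.sum_pair (by decide), add_assoc]

def take : TreatmentType → Bool → Bool
  | never, _ => false
  | complier, z => z
  | always, _ => true

lemma take_false_le_take_true (c : TreatmentType) : c.take false ≤ c.take true := by
  cases c <;> decide

instance : MeasurableSpace TreatmentType := ⊤

instance : DiscreteMeasurableSpace TreatmentType := ⟨fun _ => trivial⟩

end TreatmentType

namespace OutcomeType

instance : Fintype OutcomeType :=
  ⟨{never, helped, always}, fun o => by cases o <;> decide⟩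

lemma sum_univ {M : Type*} [AddCommMonoid M] (f : OutcomeType → M) :
    ∑ o, f o = f never + f helped + f always := by
  rw [show (Finset.univ : Finset OutcomeType) = {never, helped, always} from rfl,
    Finset.sum_insert (by decide), Finset.sum_pair (by decide), add_assoc]

def outcome : OutcomeType → Bool → Bool
  | never, _ => false
  | helped, d => d
  | always, _ => true

lemma outcome_false_le_outcome_true (o : OutcomeType) : o.outcome false ≤ o.outcome true := by
  cases o <;> decide

instance : MeasurableSpace OutcomeType := ⊤

instance : DiscreteMeasurableSpace OutcomeType := ⟨fun _ => trivial⟩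

end OutcomeType

abbrev ResponseType := TreatmentType × OutcomeType

def observe (t : ResponseType) (z : Bool) : Bool × Bool :=
  (t.2.outcome (t.1.take z), t.1.take z)

def obsPoint (b : Bool × Bool × Bool) : ℝ × ℝ × ℝ :=
  (b.1.toReal, b.2.1.toReal, b.2.2.toReal)

def latentPoint (t : ResponseType) (z : Bool) : ℝ × ℝ × ℝ × ℝ × ℝ :=
  ((t.2.outcome true).toReal, (t.2.outcome false).toReal, (t.1.take true).toReal,
    (t.1.take false).toReal, z.toReal)

lemma obsPoint_injective : Function.Injective obsPoint := by
  rintro ⟨y, d, z⟩ ⟨y', d', z'⟩ h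
  simp_all [obsPoint]

lemma mem_range_obsPoint {p : ℝ × ℝ × ℝ}
    (hp : (p.1 = 0 ∨ p.1 = 1) ∧ (p.2.1 = 0 ∨ p.2.1 = 1) ∧ (p.2.2 = 0 ∨ p.2.2 = 1)) :
    p ∈ range obsPoint := by
  obtain ⟨⟨y, hy⟩, ⟨d, hd⟩, ⟨z, hz⟩⟩ :=
    And.imp Bool.mem_range_toReal (And.imp Bool.mem_range_toReal Bool.mem_range_toReal) hp
  exact ⟨(y, d, z), by simp [obsPoint, hy, hd, hz]⟩

lemma obsMap_latentPoint (t : ResponseType) (z : Bool) :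
    obsMap (latentPoint t z) = obsPoint ((observe t z).1, (observe t z).2, z) := by
  have hD : lD (latentPoint t z) = (t.1.take z).toReal :=
    Bool.toReal_mul_add_one_sub_mul z t.1.take
  rw [obsMap, hD, lY1, lY0, latentPoint, Bool.toReal_mul_add_one_sub_mul]
  rfl

lemma obsMap_latentPoint_eq_obsPoint_iff (t : ResponseType) (z' y d z : Bool) :
    obsMap (latentPoint t z') = obsPoint (y, d, z) ↔ observe t z = (y, d) ∧ z' = z := by
  rw [obsMap_latentPoint, obsPoint_injective.eq_iff]
  constructor <;> rintro ⟨⟩ <;> simp_all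

section ResponseWeight

variable (q : Bool → Bool → Bool → ℝ)

/- The outcome type `helped` is observationally redundant for always- and never-takers. -/
def responseWeight : ResponseType → ℝ
  | (.always, .never) => q false false true
  | (.always, .helped) => 0
  | (.always, .always) => q false true true
  | (.never, .never) => q true false false
  | (.never, .helped) => 0
  | (.never, .always) => q true true false
  | (.complier, .never) => q true false true - q false false true
  | (.complier, .helped) =>
    q true true false + q true true true - q false true false - q false true true
  | (.complier, .always) => q false true false - q true true false

variable {q}

lemma responseWeight_nonneg (hq : ∀ z y d, 0 ≤ q z y d)
    (h1 : q false false true ≤ q true false true) (h2 : q true true false ≤ q false true false)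
    (h3 : q false true false + q false true true ≤ q true true false + q true true true)
    (t : ResponseType) : 0 ≤ responseWeight q t := by
  rcases t with ⟨_ | _ | _, _ | _ | _⟩ <;> simp only [responseWeight] <;>
    linarith [hq false false true, hq false true true, hq true false false, hq true true false]

lemma sum_responseWeight_observe (hq : ∀ z, ∑ y, ∑ d, q z y d = 1) (z y d : Bool) :
    ∑ t with observe t z = (y, d), responseWeight q t = q z y d := by
  have h0 := hq false
  have h1 := hq true
  simp only [Fintype.sum_bool] at h0 h1
  cases z <;> cases y <;> cases d <;>
    simp [sum_filter, Fintype.sum_prod_type, TreatmentType.sum_univ, OutcomeType.sum_univ,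
      observe, responseWeight, TreatmentType.take, OutcomeType.outcome] <;> linarith

lemma sum_responseWeight (hq : ∀ z, ∑ y, ∑ d, q z y d = 1) :
    ∑ t, responseWeight q t = 1 := by
  rw [← sum_fiberwise univ (observe · true), ← hq true, Fintype.sum_prod_type]
  simp only [sum_responseWeight_observe hq]

end ResponseWeight

noncomputable def responseLaw (w : ResponseType → ℝ) : Measure ResponseType :=
  ∑ t, ENNReal.ofReal (w t) • Measure.dirac t

noncomputable def instrumentLaw (μ : Measure (ℝ × ℝ × ℝ)) : Measure Bool :=
  ∑ z, μ {p | p.2.2 = z.toReal} • Measure.dirac z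

noncomputable def latentLaw (w : ResponseType → ℝ) (μ : Measure (ℝ × ℝ × ℝ)) :
    Measure (ℝ × ℝ × ℝ × ℝ × ℝ) :=
  ((responseLaw w).prod (instrumentLaw μ)).map fun x => latentPoint x.1 x.2

open Classical in
lemma responseLaw_apply (w : ResponseType → ℝ) (S : Set ResponseType) :
    responseLaw w S = ∑ t with t ∈ S, ENNReal.ofReal (w t) :=
  Measure.finset_sum_smul_dirac_apply _ _ _

lemma isProbabilityMeasure_responseLaw {w : ResponseType → ℝ} (hw : ∀ t, 0 ≤ w t)
    (hw1 : ∑ t, w t = 1) : IsProbabilityMeasure (responseLaw w) := by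
  constructor
  simp only [responseLaw_apply, Set.mem_univ, filter_true]
  rw [← ENNReal.ofReal_sum_of_nonneg fun t _ => hw t, hw1, ENNReal.ofReal_one]

lemma instrumentLaw_singleton (μ : Measure (ℝ × ℝ × ℝ)) (z : Bool) :
    instrumentLaw μ {z} = μ {p | p.2.2 = z.toReal} := by
  rw [instrumentLaw, Measure.finset_sum_smul_dirac_apply]
  simp [filter_eq']

lemma isProbabilityMeasure_instrumentLaw {μ : Measure (ℝ × ℝ × ℝ)}
    (hμ : ∑ z : Bool, μ {p | p.2.2 = z.toReal} = 1) :
    IsProbabilityMeasure (instrumentLaw μ) := by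
  constructor
  rw [instrumentLaw, Measure.finset_sum_smul_dirac_apply]
  simpa using hμ

lemma ae_latentLaw {w : ResponseType → ℝ} {μ : Measure (ℝ × ℝ × ℝ)}
    {p : ℝ × ℝ × ℝ × ℝ × ℝ → Prop} (h : ∀ t z, p (latentPoint t z)) :
    ∀ᵐ q ∂latentLaw w μ, p q :=
  ae_map_of_forall fun x => h x.1 x.2

lemma indepFun_latentLaw {w : ResponseType → ℝ} {μ : Measure (ℝ × ℝ × ℝ)}
    [IsProbabilityMeasure (responseLaw w)] [IsProbabilityMeasure (instrumentLaw μ)] :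
    IndepFun (fun q => (lY1 q, lY0 q, lD1 q, lD0 q)) lZ (latentLaw w μ) :=
  indepFun_map_of_comp .of_discrete (by fun_prop) (by fun_prop)
    (indepFun_prod (X := fun t : ResponseType => ((t.2.outcome true).toReal,
      (t.2.outcome false).toReal, (t.1.take true).toReal, (t.1.take false).toReal))
      (Y := Bool.toReal) .of_discrete .of_discrete)

noncomputable def condObs (μ : Measure (ℝ × ℝ × ℝ)) (z y d : Bool) : ℝ :=
  cprob μ {p | p.1 = y.toReal ∧ p.2.1 = d.toReal} {p | p.2.2 = z.toReal}

lemma outcome_treatment_inter_instrument (y d z : Bool) :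
    {p : ℝ × ℝ × ℝ | p.1 = y.toReal ∧ p.2.1 = d.toReal} ∩ {p | p.2.2 = z.toReal} =
      {obsPoint (y, d, z)} := by
  ext p
  simp [obsPoint, Prod.ext_iff, and_assoc]

section ObservedLaw

variable {μ : Measure (ℝ × ℝ × ℝ)}

lemma condObs_nonneg (z y d : Bool) : 0 ≤ condObs μ z y d :=
  div_nonneg ENNReal.toReal_nonneg ENNReal.toReal_nonneg

lemma condObs_eq (z y d : Bool) :
    condObs μ z y d = (μ {obsPoint (y, d, z)}).toReal / (μ {p | p.2.2 = z.toReal}).toReal := by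
  rw [condObs, cprob, outcome_treatment_inter_instrument]

variable (hμ : ∀ᵐ p ∂μ, p ∈ range obsPoint)
include hμ

lemma measure_instrument_eq_sum (z : Bool) :
    μ {p | p.2.2 = z.toReal} = ∑ y, ∑ d, μ {obsPoint (y, d, z)} := by
  rw [measure_eq_sum_of_ae_mem_range obsPoint_injective hμ]
  cases z <;> simp [sum_filter, Fintype.sum_prod_type, obsPoint]

lemma sum_measure_instrument [IsProbabilityMeasure μ] :
    ∑ z : Bool, μ {p | p.2.2 = z.toReal} = 1 := by
  rw [← measure_univ (μ := μ), measure_eq_sum_of_ae_mem_range obsPoint_injective hμ]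
  simp [measure_instrument_eq_sum hμ, Fintype.sum_prod_type]
  ring

lemma sum_condObs [IsFiniteMeasure μ] {z : Bool} (hz : μ {p | p.2.2 = z.toReal} ≠ 0) :
    ∑ y, ∑ d, condObs μ z y d = 1 := by
  have hsum :
      (μ {p | p.2.2 = z.toReal}).toReal = ∑ y, ∑ d, (μ {obsPoint (y, d, z)}).toReal := by
    rw [measure_instrument_eq_sum hμ, ENNReal.toReal_sum fun y _ => ?_]
    · exact sum_congr rfl fun y _ => ENNReal.toReal_sum fun d _ => measure_ne_top μ _
    · exact ENNReal.sum_ne_top.2 fun d _ => measure_ne_top μ _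
  simp only [condObs_eq, ← sum_div, ← hsum]
  exact div_self (ENNReal.toReal_ne_zero.2 ⟨hz, measure_ne_top μ _⟩)

lemma cprob_outcome_one [IsFiniteMeasure μ] (z : Bool) :
    cprob μ {p | p.1 = 1} {p | p.2.2 = z.toReal} =
      condObs μ z true false + condObs μ z true true := by
  rw [cprob, condObs_eq, condObs_eq, ← add_div,
    ← ENNReal.toReal_add (measure_ne_top μ _) (measure_ne_top μ _),
    measure_eq_sum_of_ae_mem_range obsPoint_injective hμ]
  cases z <;> simp [sum_filter, Fintype.sum_prod_type, obsPoint, add_comm]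

lemma map_obsMap_latentLaw [IsFiniteMeasure μ] (hZ : ∀ z : Bool, μ {p | p.2.2 = z.toReal} ≠ 0)
    {w : ResponseType → ℝ} (hw : ∀ t, 0 ≤ w t)
    (hmatch : ∀ z y d, ∑ t with observe t z = (y, d), w t = condObs μ z y d) :
    (latentLaw w μ).map obsMap = μ := by
  have hobs : Measurable obsMap := by
    unfold obsMap lD
    fun_prop
  have hE : Measurable fun x : ResponseType × Bool => latentPoint x.1 x.2 := .of_discrete
  rw [latentLaw, Measure.map_map hobs hE]
  refine Measure.ext_of_ae_mem_range obsPoint_injective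
    (ae_map_of_forall fun x => ⟨_, (obsMap_latentPoint x.1 x.2).symm⟩) hμ ?_
  rintro ⟨y, d, z⟩
  have hpre : (obsMap ∘ fun x : ResponseType × Bool => latentPoint x.1 x.2) ⁻¹'
      {obsPoint (y, d, z)} = {t | observe t z = (y, d)} ×ˢ {z} := by
    ext ⟨t, z'⟩
    simp [obsMap_latentPoint_eq_obsPoint_iff]
  rw [Measure.map_apply (hobs.comp hE) (measurableSet_singleton _), hpre, Measure.prod_prod,
    responseLaw_apply, instrumentLaw_singleton]
  simp only [Set.mem_ofPred_eq]
  rw [← ENNReal.ofReal_sum_of_nonneg fun t _ => hw t, hmatch, condObs,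
    ofReal_cprob_mul _ _ _ (hZ z), outcome_treatment_inter_instrument]

end ObservedLaw

theorem sharpness_of_testable_implications
    (μ : Measure (ℝ × ℝ × ℝ)) [IsProbabilityMeasure μ]
    (hbin : ∀ᵐ p ∂μ, (p.1 = 0 ∨ p.1 = 1) ∧ (p.2.1 = 0 ∨ p.2.1 = 1)
        ∧ (p.2.2 = 0 ∨ p.2.2 = 1))
    (hz0 : 0 < μ {p | p.2.2 = 1}) (hz1 : μ {p | p.2.2 = 1} < 1)
    (h1 : cprob μ {p | p.1 = 0 ∧ p.2.1 = 1} {p | p.2.2 = 1}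
        ≥ cprob μ {p | p.1 = 0 ∧ p.2.1 = 1} {p | p.2.2 = 0})
    (h2 : cprob μ {p | p.1 = 1 ∧ p.2.1 = 0} {p | p.2.2 = 0}
        ≥ cprob μ {p | p.1 = 1 ∧ p.2.1 = 0} {p | p.2.2 = 1})
    (h3 : cprob μ {p | p.1 = 1} {p | p.2.2 = 1}
        ≥ cprob μ {p | p.1 = 1} {p | p.2.2 = 0}) :
    ∃ ν : Measure (ℝ × ℝ × ℝ × ℝ × ℝ), IsProbabilityMeasure ν
      ∧ (∀ᵐ q ∂ν, (lY1 q = 0 ∨ lY1 q = 1) ∧ (lY0 q = 0 ∨ lY0 q = 1)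
          ∧ (lD1 q = 0 ∨ lD1 q = 1) ∧ (lD0 q = 0 ∨ lD0 q = 1)
          ∧ (lZ q = 0 ∨ lZ q = 1))
      ∧ IndepFun (fun q => (lY1 q, lY0 q, lD1 q, lD0 q)) lZ ν
      ∧ (∀ᵐ q ∂ν, lD0 q ≤ lD1 q)
      ∧ (∀ᵐ q ∂ν, lY0 q ≤ lY1 q)
      ∧ Measure.map obsMap ν = μ := by
  have hμ : ∀ᵐ p ∂μ, p ∈ range obsPoint := hbin.mono fun _ => mem_range_obsPoint
  have hZ : ∀ z : Bool, μ {p | p.2.2 = z.toReal} ≠ 0 := by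
    have hsum := sum_measure_instrument hμ
    rintro (_ | _) h0
    · rw [Fintype.sum_bool, h0, add_zero] at hsum
      exact hz1.ne hsum
    · exact hz0.ne' h0
  have hq1 : ∀ z, ∑ y, ∑ d, condObs μ z y d = 1 := fun z => sum_condObs hμ (hZ z)
  have hw : ∀ t, 0 ≤ responseWeight (condObs μ) t :=
    responseWeight_nonneg condObs_nonneg h1 h2
      (((cprob_outcome_one hμ false).symm.trans_le h3).trans_eq (cprob_outcome_one hμ true))
  have := isProbabilityMeasure_responseLaw hw (sum_responseWeight hq1)
  have := isProbabilityMeasure_instrumentLaw (sum_measure_instrument hμ)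
  refine ⟨latentLaw (responseWeight (condObs μ)) μ,
    Measure.isProbabilityMeasure_map .of_discrete, ae_latentLaw fun t z => ?_, indepFun_latentLaw,
    ae_latentLaw fun t z => ?_, ae_latentLaw fun t z => ?_,
    map_obsMap_latentLaw hμ hZ hw (sum_responseWeight_observe hq1)⟩
  · exact ⟨Bool.toReal_eq_zero_or_eq_one _, Bool.toReal_eq_zero_or_eq_one _,
      Bool.toReal_eq_zero_or_eq_one _, Bool.toReal_eq_zero_or_eq_one _,
      Bool.toReal_eq_zero_or_eq_one _⟩
  · exact Bool.toReal_mono t.1.take_false_le_take_true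
  · exact Bool.toReal_mono t.2.outcome_false_le_outcome_true
end

section
/- Without outcome monotonicity, the Wald estimand decomposes as: (E[h(X)Y|Z=1] − E[h(X)Y|Z=0]) / (E[Y|Z=1] − E[Y|Z=0]) = E[h(X)|G=cc] + ξ·(E[h(X)|G=cc] − E[h(X)|G=cf]), where ξ = Pr(G=cf) / (E[Y|Z=1] − E[Y|Z=0]), G=cc is the event {D1>D0, Y1>Y0} and G=cf is {D1>D0, Y1<Y0}. -/
open MeasureTheory ProbabilityTheory

/-!
Independence of `Z` from `(X, Y0, Y1, D0, D1)` means that conditioning on `Z = z` only replaces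
`Y` by `W_z = D_z Y1 + (1 - D_z) Y0`, so for every weight `g` the reduced form
`E[g(X) Y | Z = 1] - E[g(X) Y | Z = 0]` equals `E[g(X) (W_1 - W_0)]`. For binary variables with
`D0 ≤ D1`, `W_1 - W_0 = 1{cc} - 1{cf}`. Taking `g = h` gives the numerator
`E[h(X); cc] - E[h(X); cf]`, taking `g = 1` the denominator `P(cc) - P(cf)`, and the
decomposition is then algebra.
-/

section Independence

variable {Ω : Type} {β : Type*} [MeasurableSpace Ω] [MeasurableSpace β] {μ : Measure Ω}
  {f : Ω → ℝ} {Z : Ω → β} {t : Set β}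

theorem setIntegral_preimage_eq_integral_mul_measureReal (hfZ : IndepFun f Z μ)
    (hf : AEStronglyMeasurable f μ) (hZ : Measurable Z) (ht : MeasurableSet t) :
    ∫ ω in Z ⁻¹' t, f ω ∂μ = (∫ ω, f ω ∂μ) * μ.real (Z ⁻¹' t) := by
  have hind : (Z ⁻¹' t).indicator f = fun ω => f ω * t.indicator 1 (Z ω) := by
    ext ω
    by_cases hω : Z ω ∈ t <;> simp [Set.indicator, hω]
  have hindep : IndepFun f (fun ω => t.indicator (1 : β → ℝ) (Z ω)) μ :=
    hfZ.comp measurable_id (measurable_one.indicator ht)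
  rw [← integral_indicator (hZ ht), hind,
    hindep.integral_fun_mul_eq_mul_integral hf
      ((measurable_one.indicator ht).comp hZ).aestronglyMeasurable,
    ← integral_indicator_one (hZ ht)]
  rfl

theorem cmean_eq_integral_of_indepFun_s9 [IsFiniteMeasure μ] {g : Ω → ℝ} (hfZ : IndepFun f Z μ)
    (hf : AEStronglyMeasurable f μ) (hZ : Measurable Z) (ht : MeasurableSet t)
    (hpos : μ (Z ⁻¹' t) ≠ 0) (hgf : Set.EqOn g f (Z ⁻¹' t)) :
    cmean μ g (Z ⁻¹' t) = ∫ ω, f ω ∂μ := by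
  have hreal : μ.real (Z ⁻¹' t) ≠ 0 := (measureReal_ne_zero_iff (measure_ne_top μ _)).2 hpos
  rw [cmean, setIntegral_congr_fun (hZ ht) hgf,
    setIntegral_preimage_eq_integral_mul_measureReal hfZ hf hZ ht, ← measureReal_def,
    mul_div_cancel_right₀ _ hreal]

end Independence

theorem cmean_mul_measureReal {Ω : Type} [MeasurableSpace Ω] (μ : Measure Ω) [IsFiniteMeasure μ]
    (f : Ω → ℝ) (s : Set Ω) : cmean μ f s * μ.real s = ∫ ω in s, f ω ∂μ := by
  rcases eq_or_ne (μ s) 0 with hs | hs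
  · simp [Measure.restrict_eq_zero.2 hs, measureReal_def, hs]
  · rw [cmean, ← measureReal_def,
      div_mul_cancel₀ _ ((measureReal_ne_zero_iff (measure_ne_top μ _)).2 hs)]

section Switching

variable {d d0 d1 y0 y1 : ℝ}

theorem norm_switch_le_one (hd : d = 0 ∨ d = 1) (hy0 : y0 = 0 ∨ y0 = 1) (hy1 : y1 = 0 ∨ y1 = 1) :
    ‖d * y1 + (1 - d) * y0‖ ≤ 1 := by
  rcases hd with rfl | rfl <;> rcases hy0 with rfl | rfl <;> rcases hy1 with rfl | rfl <;> norm_num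

theorem switch_sub_switch_eq_ite (hd0 : d0 = 0 ∨ d0 = 1) (hd1 : d1 = 0 ∨ d1 = 1)
    (hy0 : y0 = 0 ∨ y0 = 1) (hy1 : y1 = 0 ∨ y1 = 1) (hd : d0 ≤ d1) :
    (d1 * y1 + (1 - d1) * y0) - (d0 * y1 + (1 - d0) * y0)
      = (if d0 < d1 ∧ y0 < y1 then 1 else 0) - (if d0 < d1 ∧ y1 < y0 then 1 else 0) := by
  rcases hd0 with rfl | rfl <;> rcases hd1 with rfl | rfl <;>
    rcases hy0 with rfl | rfl <;> rcases hy1 with rfl | rfl <;> norm_num <;> norm_num at hd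

end Switching

section PotentialOutcomes

variable {Ω : Type} [MeasurableSpace Ω] {μ : Measure Ω}

theorem MeasureTheory.Integrable.mul_switch {g d y0 y1 : Ω → ℝ} (hg : Integrable g μ)
    (hdm : Measurable d) (hy0m : Measurable y0) (hy1m : Measurable y1) (hd : ∀ ω, d ω = 0 ∨ d ω = 1)
    (hy0 : ∀ ω, y0 ω = 0 ∨ y0 ω = 1) (hy1 : ∀ ω, y1 ω = 0 ∨ y1 ω = 1) :
    Integrable (fun ω => g ω * (d ω * y1 ω + (1 - d ω) * y0 ω)) μ :=
  hg.mul_bdd (by fun_prop) (ae_of_all _ fun ω => norm_switch_le_one (hd ω) (hy0 ω) (hy1 ω))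

theorem cmean_mul_eq_integral_mul_switch [IsFiniteMeasure μ] {Z d Y0 Y1 Y X : Ω → ℝ} {c : ℝ}
    (hZm : Measurable Z) (hdm : Measurable d) (hY0m : Measurable Y0) (hY1m : Measurable Y1)
    (hXm : Measurable X) (hindep : IndepFun (fun ω => (X ω, Y0 ω, Y1 ω, d ω)) Z μ)
    (hc : μ {ω | Z ω = c} ≠ 0) (hY : ∀ ω, Z ω = c → Y ω = d ω * Y1 ω + (1 - d ω) * Y0 ω)
    {k : ℝ → ℝ} (hkm : Measurable k) :
    cmean μ (fun ω => k (X ω) * Y ω) {ω | Z ω = c}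
      = ∫ ω, k (X ω) * (d ω * Y1 ω + (1 - d ω) * Y0 ω) ∂μ :=
  cmean_eq_integral_of_indepFun_s9 (t := {c})
    (hindep.comp
      (φ := fun p : ℝ × ℝ × ℝ × ℝ => k p.1 * (p.2.2.2 * p.2.2.1 + (1 - p.2.2.2) * p.2.1))
      (by fun_prop) measurable_id)
    (by fun_prop) hZm (measurableSet_singleton c) hc (fun ω hω => by simp only [hY ω hω])

theorem cmean_mul_sub_cmean_mul_eq_setIntegral_sub [IsFiniteMeasure μ]
    {Z D0 D1 Y0 Y1 D Y X : Ω → ℝ} (hZm : Measurable Z) (hD0m : Measurable D0)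
    (hD1m : Measurable D1) (hY0m : Measurable Y0) (hY1m : Measurable Y1) (hXm : Measurable X)
    (hD0bin : ∀ ω, D0 ω = 0 ∨ D0 ω = 1) (hD1bin : ∀ ω, D1 ω = 0 ∨ D1 ω = 1)
    (hY0bin : ∀ ω, Y0 ω = 0 ∨ Y0 ω = 1) (hY1bin : ∀ ω, Y1 ω = 0 ∨ Y1 ω = 1)
    (hD : ∀ ω, D ω = Z ω * D1 ω + (1 - Z ω) * D0 ω)
    (hY : ∀ ω, Y ω = D ω * Y1 ω + (1 - D ω) * Y0 ω)
    (hindep : IndepFun (fun ω => (X ω, Y0 ω, Y1 ω, D0 ω, D1 ω)) Z μ)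
    (hZ1 : μ {ω | Z ω = 1} ≠ 0) (hZ0 : μ {ω | Z ω = 0} ≠ 0) (hmonoD : ∀ᵐ ω ∂μ, D0 ω ≤ D1 ω)
    {k : ℝ → ℝ} (hkm : Measurable k) (hk : Integrable (fun ω => k (X ω)) μ) :
    cmean μ (fun ω => k (X ω) * Y ω) {ω | Z ω = 1}
        - cmean μ (fun ω => k (X ω) * Y ω) {ω | Z ω = 0}
      = ∫ ω in {ω | D0 ω < D1 ω ∧ Y0 ω < Y1 ω}, k (X ω) ∂μ
        - ∫ ω in {ω | D0 ω < D1 ω ∧ Y1 ω < Y0 ω}, k (X ω) ∂μ := by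
  have hcc : MeasurableSet {ω | D0 ω < D1 ω ∧ Y0 ω < Y1 ω} :=
    (measurableSet_lt hD0m hD1m).inter (measurableSet_lt hY0m hY1m)
  have hcf : MeasurableSet {ω | D0 ω < D1 ω ∧ Y1 ω < Y0 ω} :=
    (measurableSet_lt hD0m hD1m).inter (measurableSet_lt hY1m hY0m)
  have hW1 := hk.mul_switch hD1m hY0m hY1m hD1bin hY0bin hY1bin
  have hW0 := hk.mul_switch hD0m hY0m hY1m hD0bin hY0bin hY1bin
  have hdiff : ∀ᵐ ω ∂μ, k (X ω) * (D1 ω * Y1 ω + (1 - D1 ω) * Y0 ω)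
        - k (X ω) * (D0 ω * Y1 ω + (1 - D0 ω) * Y0 ω)
      = {ω | D0 ω < D1 ω ∧ Y0 ω < Y1 ω}.indicator (fun ω => k (X ω)) ω
        - {ω | D0 ω < D1 ω ∧ Y1 ω < Y0 ω}.indicator (fun ω => k (X ω)) ω := by
    filter_upwards [hmonoD] with ω hω
    rw [← mul_sub, switch_sub_switch_eq_ite (hD0bin ω) (hD1bin ω) (hY0bin ω) (hY1bin ω) hω]
    simp only [Set.indicator_apply, Set.mem_ofPred_eq]
    split_ifs <;> ring
  rw [cmean_mul_eq_integral_mul_switch hZm hD1m hY0m hY1m hXm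
      (hindep.comp (φ := fun p => (p.1, p.2.1, p.2.2.1, p.2.2.2.2)) (by fun_prop) measurable_id)
      hZ1 (fun ω hω => by rw [hY, hD, hω]; ring) hkm,
    cmean_mul_eq_integral_mul_switch hZm hD0m hY0m hY1m hXm
      (hindep.comp (φ := fun p => (p.1, p.2.1, p.2.2.1, p.2.2.2.1)) (by fun_prop) measurable_id)
      hZ0 (fun ω hω => by rw [hY, hD, hω]; ring) hkm,
    ← integral_sub hW1 hW0, integral_congr_ae hdiff,
    integral_sub (hk.indicator hcc) (hk.indicator hcf), integral_indicator hcc,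
    integral_indicator hcf]

end PotentialOutcomes

theorem wald_decomposition_without_outcome_monotonicity
    {Ω : Type} [MeasurableSpace Ω] (μ : Measure Ω) [IsProbabilityMeasure μ]
    (Z D0 D1 Y0 Y1 D Y X : Ω → ℝ)
    (hZm : Measurable Z) (hD0m : Measurable D0) (hD1m : Measurable D1)
    (hY0m : Measurable Y0) (hY1m : Measurable Y1) (hXm : Measurable X)
    (hZbin : ∀ ω, Z ω = 0 ∨ Z ω = 1)
    (hD0bin : ∀ ω, D0 ω = 0 ∨ D0 ω = 1)
    (hD1bin : ∀ ω, D1 ω = 0 ∨ D1 ω = 1)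
    (hY0bin : ∀ ω, Y0 ω = 0 ∨ Y0 ω = 1)
    (hY1bin : ∀ ω, Y1 ω = 0 ∨ Y1 ω = 1)
    (hD : ∀ ω, D ω = Z ω * D1 ω + (1 - Z ω) * D0 ω)
    (hY : ∀ ω, Y ω = D ω * Y1 ω + (1 - D ω) * Y0 ω)
    (hindep : IndepFun (fun ω => (X ω, Y0 ω, Y1 ω, D0 ω, D1 ω)) Z μ)
    (hz0 : 0 < μ {ω | Z ω = 1}) (hz1 : μ {ω | Z ω = 1} < 1)
    (hmonoD : ∀ᵐ ω ∂μ, D0 ω ≤ D1 ω)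
    (h : ℝ → ℝ) (hhm : Measurable h)
    (hint : Integrable (fun ω => h (X ω)) μ)
    (hRF : cmean μ Y {ω | Z ω = 1} - cmean μ Y {ω | Z ω = 0} ≠ 0) :
    (cmean μ (fun ω => h (X ω) * Y ω) {ω | Z ω = 1}
        - cmean μ (fun ω => h (X ω) * Y ω) {ω | Z ω = 0})
      / (cmean μ Y {ω | Z ω = 1} - cmean μ Y {ω | Z ω = 0})
    = cmean μ (fun ω => h (X ω)) {ω | D0 ω < D1 ω ∧ Y0 ω < Y1 ω}
      + ((μ {ω | D0 ω < D1 ω ∧ Y1 ω < Y0 ω}).toReal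
          / (cmean μ Y {ω | Z ω = 1} - cmean μ Y {ω | Z ω = 0}))
        * (cmean μ (fun ω => h (X ω)) {ω | D0 ω < D1 ω ∧ Y0 ω < Y1 ω}
            - cmean μ (fun ω => h (X ω)) {ω | D0 ω < D1 ω ∧ Y1 ω < Y0 ω}) := by
  have hZ0 : μ {ω | Z ω = 0} ≠ 0 := by
    have hcompl : {ω | Z ω = 0} = {ω | Z ω = 1}ᶜ := by
      ext ω; rcases hZbin ω with hz | hz <;> simp [hz]
    have hZ1m : MeasurableSet {ω | Z ω = 1} := hZm (measurableSet_singleton 1)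
    rw [hcompl, prob_compl_eq_one_sub hZ1m]
    exact (tsub_pos_of_lt hz1).ne'
  have hnum := cmean_mul_sub_cmean_mul_eq_setIntegral_sub hZm hD0m hD1m hY0m hY1m hXm
    hD0bin hD1bin hY0bin hY1bin hD hY hindep hz0.ne' hZ0 hmonoD hhm hint
  have hden := cmean_mul_sub_cmean_mul_eq_setIntegral_sub hZm hD0m hD1m hY0m hY1m hXm
    hD0bin hD1bin hY0bin hY1bin hD hY hindep hz0.ne' hZ0 hmonoD measurable_const
    (integrable_const (1 : ℝ))
  simp only [one_mul, setIntegral_const, smul_eq_mul, mul_one] at hden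
  rw [hden] at hRF ⊢
  rw [hnum, ← cmean_mul_measureReal μ _ {ω | D0 ω < D1 ω ∧ Y0 ω < Y1 ω},
    ← cmean_mul_measureReal μ _ {ω | D0 ω < D1 ω ∧ Y1 ω < Y0 ω}, ← measureReal_def]
  field_simp
  ring
end

section
/- Under the LATE assumptions plus outcome monotonicity, the share of the group G=ca (compliers who are outcome always-takers: D1>D0, Y0=Y1=1) is identified by Pr(G=ca) = E[(1−D)Y | Z=0] − E[(1−D)Y | Z=1]. -/
open MeasureTheory ProbabilityTheory

/- Under independence of the potential variables from `Z`, the two conditional means are the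
unconditional means `E[(1 - D0) Y0]` and `E[(1 - D1) Y0]`. Their difference is `E[(D1 - D0) Y0]`,
and by the two monotonicity assumptions `(D1 - D0) Y0` is almost surely the indicator of the
group `D0 < D1, Y0 = Y1 = 1`. -/

lemma ProbabilityTheory.IndepFun.setIntegral_preimage_eq {Ω γ : Type*} [MeasurableSpace Ω]
    [MeasurableSpace γ] {μ : Measure Ω} {V : Ω → ℝ} {Z : Ω → γ} {t : Set γ}
    (hVZ : IndepFun V Z μ) (hV : AEStronglyMeasurable V μ)
    (hZ : Measurable Z) (ht : MeasurableSet t) :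
    ∫ ω in Z ⁻¹' t, V ω ∂μ = μ.real (Z ⁻¹' t) * ∫ ω, V ω ∂μ := by
  have hind : Measurable (t.indicator (1 : γ → ℝ)) := measurable_one.indicator ht
  calc ∫ ω in Z ⁻¹' t, V ω ∂μ = ∫ ω, t.indicator 1 (Z ω) * V ω ∂μ := by
        rw [← integral_indicator (hZ ht)]
        congr 1 with ω
        by_cases h : Z ω ∈ t <;> simp [h]
    _ = (∫ ω, t.indicator 1 (Z ω) ∂μ) * ∫ ω, V ω ∂μ :=
        (hVZ.symm.comp hind measurable_id).integral_fun_mul_eq_mul_integral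
          (hind.comp hZ).aestronglyMeasurable hV
    _ = μ.real (Z ⁻¹' t) * ∫ ω, V ω ∂μ := by
        simp_rw [← Set.indicator_comp_right, Pi.one_comp, integral_indicator_one (hZ ht)]

lemma ProbabilityTheory.IndepFun.cmean_eq_integral_of_eqOn {Ω γ : Type} [MeasurableSpace Ω]
    [MeasurableSpace γ] {μ : Measure Ω} [IsFiniteMeasure μ] {f V : Ω → ℝ} {Z : Ω → γ}
    {t : Set γ} (hVZ : IndepFun V Z μ) (hV : AEStronglyMeasurable V μ) (hZ : Measurable Z)
    (ht : MeasurableSet t) (hpos : μ (Z ⁻¹' t) ≠ 0) (hfV : Set.EqOn f V (Z ⁻¹' t)) :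
    cmean μ f (Z ⁻¹' t) = ∫ ω, V ω ∂μ := by
  have hreal : μ.real (Z ⁻¹' t) ≠ 0 := (measureReal_ne_zero_iff).mpr hpos
  rw [cmean, setIntegral_congr_fun (hZ ht) hfV, hVZ.setIntegral_preimage_eq hV hZ ht,
    ← measureReal_def, mul_div_cancel_left₀ _ hreal]

lemma one_sub_mul_mix_eq_of_binary {d a b : ℝ} (hd : d = 0 ∨ d = 1) :
    (1 - d) * (d * a + (1 - d) * b) = (1 - d) * b := by
  rcases hd with rfl | rfl <;> ring

lemma sub_mul_eq_ite_of_binary {d₀ d₁ y₀ y₁ : ℝ} (hd₀ : d₀ = 0 ∨ d₀ = 1) (hd₁ : d₁ = 0 ∨ d₁ = 1)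
    (hy₀ : y₀ = 0 ∨ y₀ = 1) (hy₁ : y₁ = 0 ∨ y₁ = 1) (hd : d₀ ≤ d₁) (hy : y₀ ≤ y₁) :
    (d₁ - d₀) * y₀ = if d₀ < d₁ ∧ y₀ = 1 ∧ y₁ = 1 then 1 else 0 := by
  rcases hd₀ with rfl | rfl <;> rcases hd₁ with rfl | rfl <;> rcases hy₀ with rfl | rfl <;>
    rcases hy₁ with rfl | rfl <;> norm_num at *

lemma integral_sub_mul_eq_measureReal_of_binary {Ω : Type*} [MeasurableSpace Ω]
    {μ : Measure Ω}
    {D0 D1 Y0 Y1 : Ω → ℝ} (hD0m : Measurable D0) (hD1m : Measurable D1) (hY0m : Measurable Y0)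
    (hY1m : Measurable Y1) (hD0bin : ∀ ω, D0 ω = 0 ∨ D0 ω = 1)
    (hD1bin : ∀ ω, D1 ω = 0 ∨ D1 ω = 1) (hY0bin : ∀ ω, Y0 ω = 0 ∨ Y0 ω = 1)
    (hY1bin : ∀ ω, Y1 ω = 0 ∨ Y1 ω = 1) (hmonoD : ∀ᵐ ω ∂μ, D0 ω ≤ D1 ω)
    (hmonoY : ∀ᵐ ω ∂μ, Y0 ω ≤ Y1 ω) :
    ∫ ω, (D1 ω - D0 ω) * Y0 ω ∂μ = μ.real {ω | D0 ω < D1 ω ∧ Y0 ω = 1 ∧ Y1 ω = 1} := by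
  rw [← integral_indicator_one (by measurability)]
  refine integral_congr_ae ?_
  filter_upwards [hmonoD, hmonoY] with ω hd hy
  simp only [Set.indicator_apply, Set.mem_ofPred_eq, Pi.one_apply,
    sub_mul_eq_ite_of_binary (hD0bin ω) (hD1bin ω) (hY0bin ω) (hY1bin ω) hd hy]

lemma integrable_one_sub_mul_of_binary {Ω : Type*} [MeasurableSpace Ω] {μ : Measure Ω}
    [IsFiniteMeasure μ] {d y : Ω → ℝ} (hdm : Measurable d) (hym : Measurable y)
    (hd : ∀ ω, d ω = 0 ∨ d ω = 1) (hy : ∀ ω, y ω = 0 ∨ y ω = 1) :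
    Integrable (fun ω => (1 - d ω) * y ω) μ := by
  refine .of_bound (by fun_prop) 1 (ae_of_all _ fun ω => ?_)
  rcases hd ω with h | h <;> rcases hy ω with h' | h' <;> simp [h, h']

theorem ca_group_share
{Ω : Type} [MeasurableSpace Ω] (μ : Measure Ω) [IsProbabilityMeasure μ]
    (Z D0 D1 Y0 Y1 D Y : Ω → ℝ)
    (hZm : Measurable Z) (hD0m : Measurable D0) (hD1m : Measurable D1)
    (hY0m : Measurable Y0) (hY1m : Measurable Y1)
    (hZbin : ∀ ω, Z ω = 0 ∨ Z ω = 1)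
    (hD0bin : ∀ ω, D0 ω = 0 ∨ D0 ω = 1)
    (hD1bin : ∀ ω, D1 ω = 0 ∨ D1 ω = 1)
    (hY0bin : ∀ ω, Y0 ω = 0 ∨ Y0 ω = 1)
    (hY1bin : ∀ ω, Y1 ω = 0 ∨ Y1 ω = 1)
    (hD : ∀ ω, D ω = Z ω * D1 ω + (1 - Z ω) * D0 ω)
    (hY : ∀ ω, Y ω = D ω * Y1 ω + (1 - D ω) * Y0 ω)
    (hz0 : 0 < μ {ω | Z ω = 1}) (hz1 : μ {ω | Z ω = 1} < 1)
    (hmonoD : ∀ᵐ ω ∂μ, D0 ω ≤ D1 ω)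
    (hmonoY : ∀ᵐ ω ∂μ, Y0 ω ≤ Y1 ω)
    (hindep : IndepFun (fun ω => (Y0 ω, Y1 ω, D0 ω, D1 ω)) Z μ) :
    (μ {ω | D0 ω < D1 ω ∧ Y0 ω = 1 ∧ Y1 ω = 1}).toReal
      = cmean μ (fun ω => (1 - D ω) * Y ω) {ω | Z ω = 0}
        - cmean μ (fun ω => (1 - D ω) * Y ω) {ω | Z ω = 1} := by
  have hZ1m : MeasurableSet {ω | Z ω = 1} := hZm (measurableSet_singleton 1)
  have hZ0 : μ {ω | Z ω = 0} ≠ 0 := by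
    have hcompl : {ω | Z ω = 0} = {ω | Z ω = 1}ᶜ := by
      ext ω
      rcases hZbin ω with h | h <;> simp [h]
    rw [hcompl, Ne, prob_compl_eq_zero_iff hZ1m]
    exact hz1.ne
  have hindep₀ : IndepFun (fun ω => (1 - D0 ω) * Y0 ω) Z μ :=
    hindep.comp (φ := fun p : ℝ × ℝ × ℝ × ℝ => (1 - p.2.2.1) * p.1) (by fun_prop) measurable_id
  have hindep₁ : IndepFun (fun ω => (1 - D1 ω) * Y0 ω) Z μ :=
    hindep.comp (φ := fun p : ℝ × ℝ × ℝ × ℝ => (1 - p.2.2.2) * p.1) (by fun_prop) measurable_id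
  have hobs₀ : Set.EqOn (fun ω => (1 - D ω) * Y ω) (fun ω => (1 - D0 ω) * Y0 ω)
      {ω | Z ω = 0} := fun ω (hz : Z ω = 0) => by
    have hDω : D ω = D0 ω := by rw [hD ω, hz]; ring
    simp only [hY ω, hDω, one_sub_mul_mix_eq_of_binary (hD0bin ω)]
  have hobs₁ : Set.EqOn (fun ω => (1 - D ω) * Y ω) (fun ω => (1 - D1 ω) * Y0 ω)
      {ω | Z ω = 1} := fun ω (hz : Z ω = 1) => by
    have hDω : D ω = D1 ω := by rw [hD ω, hz]; ring
    simp only [hY ω, hDω, one_sub_mul_mix_eq_of_binary (hD1bin ω)]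
  calc (μ {ω | D0 ω < D1 ω ∧ Y0 ω = 1 ∧ Y1 ω = 1}).toReal
      = ∫ ω, (D1 ω - D0 ω) * Y0 ω ∂μ :=
        (integral_sub_mul_eq_measureReal_of_binary hD0m hD1m hY0m hY1m hD0bin hD1bin hY0bin
          hY1bin hmonoD hmonoY).symm
    _ = ∫ ω, ((1 - D0 ω) * Y0 ω - (1 - D1 ω) * Y0 ω) ∂μ := by congr 1 with ω; ring
    _ = (∫ ω, (1 - D0 ω) * Y0 ω ∂μ) - ∫ ω, (1 - D1 ω) * Y0 ω ∂μ :=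
        integral_sub (integrable_one_sub_mul_of_binary hD0m hY0m hD0bin hY0bin)
          (integrable_one_sub_mul_of_binary hD1m hY0m hD1bin hY0bin)
    _ = _ := congr_arg₂ (· - ·)
        (hindep₀.cmean_eq_integral_of_eqOn (by fun_prop) hZm (measurableSet_singleton 0) hZ0
          hobs₀).symm
        (hindep₁.cmean_eq_integral_of_eqOn (by fun_prop) hZm (measurableSet_singleton 1) hz0.ne'
          hobs₁).symm
end

section
/- Conditional weight positivity for quantile estimation: with π = κ − κ0·Y − κ1·(1−Y) as defined, under random assignment, treatment monotonicity, and outcome monotonicity, E[π | Y, X] = Pr(D1>D0, Y1>Y0 | Y, X); in particular E[π | Y, X] ≥ 0 almost surely. -/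
/-!
Let `W = (X, Y0, Y1, D0, D1)` be the type of a unit; it is independent of `Z`. Had the
instrument been `z`, the outcome would be `y_z = switch (switch z D1 D0) Y1 Y0`, so the
integral of an observed quantity `F (Z, W)` equals `∫ p1 F (1, W) + p0 F (0, W)`. Take
`F (z, W) = π (z, y_z) χ (y_z, X)` with `χ` the indicator of a `(Y, X)`-event. For a complier
with `Y0 < Y1` we have `y_1 = 1`, `y_0 = 0`, and this average is `p1 χ (1, X) + p0 χ (0, X)`,
exactly what the complier indicator gives; for every other unit `y_1 = y_0 = y`, and
`p1 π (1, y) + p0 π (0, y) = p1 + p0 - 1 = 0`. Hence `π` and the complier indicator have the same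
integral over every `σ(Y, X)`-event, so the same conditional expectation, and the latter is
nonnegative.
-/

open MeasureTheory ProbabilityTheory

section

variable {Ω β : Type*} {mΩ : MeasurableSpace Ω} {μ : Measure Ω}

lemma integrable_of_binary [IsFiniteMeasure μ] {f : Ω → ℝ} (hf : AEStronglyMeasurable f μ)
    (hbin : ∀ ω, f ω = 0 ∨ f ω = 1) : Integrable f μ :=
  .of_bound hf 1 (ae_of_all _ fun ω => by rcases hbin ω with h | h <;> simp [h])

lemma integral_eq_measureReal_of_binary {f : Ω → ℝ} (hf : Measurable f)
    (hbin : ∀ ω, f ω = 0 ∨ f ω = 1) : ∫ ω, f ω ∂μ = μ.real {ω | f ω = 1} := by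
  have hf_eq : f = {ω | f ω = 1}.indicator 1 := by
    ext ω; rcases hbin ω with h | h <;> simp [h]
  conv_lhs => rw [hf_eq]
  exact integral_indicator_one (hf (measurableSet_singleton 1))

lemma measureReal_eq_zero_add_measureReal_eq_one [IsProbabilityMeasure μ] {Z : Ω → ℝ}
    (hZ : Measurable Z) (hZbin : ∀ ω, Z ω = 0 ∨ Z ω = 1) :
    μ.real {ω | Z ω = 0} + μ.real {ω | Z ω = 1} = 1 := by
  have hcompl : {ω | Z ω = 0} = {ω | Z ω = 1}ᶜ := by
    ext ω; rcases hZbin ω with h | h <;> simp [h]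
  have hs : MeasurableSet {ω | Z ω = 1} := hZ (measurableSet_singleton 1)
  rw [hcompl, add_comm, measureReal_add_measureReal_compl hs, probReal_univ]

lemma measureReal_eq_zero_ne_zero_of_lt_one [IsProbabilityMeasure μ] {Z : Ω → ℝ}
    (hZ : Measurable Z) (hZbin : ∀ ω, Z ω = 0 ∨ Z ω = 1) (hz1 : μ {ω | Z ω = 1} < 1) :
    μ.real {ω | Z ω = 0} ≠ 0 := by
  have : μ.real {ω | Z ω = 1} < 1 :=
    (ENNReal.toReal_strict_mono ENNReal.one_ne_top hz1).trans_eq ENNReal.toReal_one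
  linarith [measureReal_eq_zero_add_measureReal_eq_one (μ := μ) hZ hZbin]

lemma ProbabilityTheory.IndepFun.of_measurable_comap [MeasurableSpace β] {W : Ω → β}
    {Z G : Ω → ℝ} (hWZ : IndepFun W Z μ)
    (hG : Measurable[MeasurableSpace.comap W inferInstance] G) : IndepFun G Z μ := by
  rw [IndepFun_iff_Indep] at hWZ ⊢
  exact indep_of_indep_of_le_left hWZ hG.comap_le

lemma integral_binary_mul_of_indepFun [MeasurableSpace β] {W : Ω → β} {Z G : Ω → ℝ}
    (hWZ : IndepFun W Z μ) (hZ : Measurable Z) (hZbin : ∀ ω, Z ω = 0 ∨ Z ω = 1)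
    (hG : Measurable[MeasurableSpace.comap W inferInstance] G)
    (hGm : AEStronglyMeasurable G μ) :
    ∫ ω, Z ω * G ω ∂μ = μ.real {ω | Z ω = 1} * ∫ ω, G ω ∂μ := by
  rw [← integral_eq_measureReal_of_binary hZ hZbin]
  exact (hWZ.of_measurable_comap hG).symm.integral_mul_eq_mul_integral
    hZ.aestronglyMeasurable hGm

theorem condExp_comap_ae_eq_of_forall_setIntegral_preimage_eq [IsFiniteMeasure μ]
    [MeasurableSpace β] {V : Ω → β} (hV : Measurable V) {f g : Ω → ℝ}
    (hf : Integrable f μ) (hg : Integrable g μ)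
    (h : ∀ t, MeasurableSet t →
      ∫ ω in V ⁻¹' t, f ω ∂μ = ∫ ω in V ⁻¹' t, g ω ∂μ) :
    μ[f | MeasurableSpace.comap V inferInstance]
      =ᵐ[μ] μ[g | MeasurableSpace.comap V inferInstance] := by
  have hm := hV.comap_le
  have : IsFiniteMeasure (μ.trim hm) := isFiniteMeasure_trim hm
  refine ae_eq_condExp_of_forall_setIntegral_eq hm hg
    (fun s _ _ => integrable_condExp.integrableOn) (fun s hs _ => ?_)
    stronglyMeasurable_condExp.aestronglyMeasurable
  obtain ⟨t, ht, rfl⟩ := hs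
  rw [setIntegral_condExp hm hf ⟨t, ht, rfl⟩, h t ht]

end

namespace BinaryIV

variable {Ω β γ : Type*} {mΩ : MeasurableSpace Ω} {μ : Measure Ω}

/-- The switching equation: `D = switch Z D1 D0` and `Y = switch D Y1 Y0`. -/
def switch (z a b : ℝ) : ℝ := z * a + (1 - z) * b

@[simp] lemma switch_one (a b : ℝ) : switch 1 a b = a := by simp [switch]

@[simp] lemma switch_zero (a b : ℝ) : switch 0 a b = b := by simp [switch]

lemma switch_binary {z a b : ℝ} (hz : z = 0 ∨ z = 1) (ha : a = 0 ∨ a = 1)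
    (hb : b = 0 ∨ b = 1) : switch z a b = 0 ∨ switch z a b = 1 := by
  rcases hz with rfl | rfl <;> simpa

lemma eq_switch_of_binary {z : ℝ} (hz : z = 0 ∨ z = 1) (f : ℝ → ℝ) :
    f z = switch z (f 1) (f 0) := by
  rcases hz with rfl | rfl <;> simp

@[fun_prop] lemma _root_.Measurable.switch {α : Type*} {m : MeasurableSpace α}
    {z a b : α → ℝ} (hz : Measurable z) (ha : Measurable a) (hb : Measurable b) :
    Measurable fun x => switch (z x) (a x) (b x) := by
  unfold BinaryIV.switch; fun_prop

theorem integral_switch_of_indepFun [MeasurableSpace β] {W : Ω → β} {Z G1 G0 : Ω → ℝ}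
    (hWZ : IndepFun W Z μ) (hZ : Measurable Z) (hZbin : ∀ ω, Z ω = 0 ∨ Z ω = 1)
    (hG1 : Measurable[MeasurableSpace.comap W inferInstance] G1)
    (hG0 : Measurable[MeasurableSpace.comap W inferInstance] G0)
    (hG1i : Integrable G1 μ) (hG0i : Integrable G0 μ) :
    ∫ ω, switch (Z ω) (G1 ω) (G0 ω) ∂μ
      = ∫ ω, μ.real {ω | Z ω = 1} * G1 ω + μ.real {ω | Z ω = 0} * G0 ω ∂μ := by
  have hZ' : Measurable fun ω => 1 - Z ω := by fun_prop
  have hZbin' : ∀ ω, 1 - Z ω = 0 ∨ 1 - Z ω = 1 := fun ω => by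
    rcases hZbin ω with h | h <;> simp [h]
  have hWZ' : IndepFun W (fun ω => 1 - Z ω) μ :=
    hWZ.comp measurable_id (measurable_const.sub measurable_id)
  have hZ0 : {ω | Z ω = 0} = {ω | 1 - Z ω = 1} := by ext ω; simp [sub_eq_self]
  have hZG1 : Integrable (fun ω => Z ω * G1 ω) μ := hG1i.bdd_mul hZ.aestronglyMeasurable
    (c := 1) (ae_of_all _ fun ω => by rcases hZbin ω with h | h <;> simp [h])
  have hZG0 : Integrable (fun ω => (1 - Z ω) * G0 ω) μ := hG0i.bdd_mul hZ'.aestronglyMeasurable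
    (c := 1) (ae_of_all _ fun ω => by rcases hZbin' ω with h | h <;> simp [h])
  simp only [switch]
  rw [integral_add hZG1 hZG0, integral_add (hG1i.const_mul _) (hG0i.const_mul _),
    integral_const_mul, integral_const_mul, hZ0,
    integral_binary_mul_of_indepFun hWZ hZ hZbin hG1 hG1i.aestronglyMeasurable,
    integral_binary_mul_of_indepFun hWZ' hZ' hZbin' hG0 hG0i.aestronglyMeasurable]

/-- The weight `π = κ - κ0 * Y - κ1 * (1 - Y)`, in which `D` cancels out; `p0` and `p1` stand
for `P(Z = 0)` and `P(Z = 1)`. -/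
noncomputable def piWeight (p0 p1 z y : ℝ) : ℝ := 1 - (1 - y) * z / p1 - y * (1 - z) / p0

lemma integrable_piWeight [IsFiniteMeasure μ] {Z Y : Ω → ℝ} (hZ : Measurable Z)
    (hY : Measurable Y) (hZbin : ∀ ω, Z ω = 0 ∨ Z ω = 1) (hYbin : ∀ ω, Y ω = 0 ∨ Y ω = 1)
    (p0 p1 : ℝ) : Integrable (fun ω => piWeight p0 p1 (Z ω) (Y ω)) μ := by
  have h1 : Integrable (fun ω => (1 - Y ω) * Z ω) μ :=
    integrable_of_binary (by fun_prop : Measurable _).aestronglyMeasurable fun ω => by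
      rcases hZbin ω with h | h <;> rcases hYbin ω with h' | h' <;> simp [h, h']
  have h0 : Integrable (fun ω => Y ω * (1 - Z ω)) μ :=
    integrable_of_binary (by fun_prop : Measurable _).aestronglyMeasurable fun ω => by
      rcases hZbin ω with h | h <;> rcases hYbin ω with h' | h' <;> simp [h, h']
  unfold piWeight
  fun_prop

lemma piWeight_mix_eq {p0 p1 : ℝ} (hp0 : p0 ≠ 0) (hp1 : p1 ≠ 0) (y : ℝ) :
    p1 * piWeight p0 p1 1 y + p0 * piWeight p0 p1 0 y = p0 + p1 - 1 := by
  simp only [piWeight]; field_simp; ring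

lemma switch_eq_switch_of_not_complier {d0 d1 y0 y1 : ℝ} (hd0 : d0 = 0 ∨ d0 = 1)
    (hd1 : d1 = 0 ∨ d1 = 1) (hy0 : y0 = 0 ∨ y0 = 1) (hy1 : y1 = 0 ∨ y1 = 1)
    (hd : d0 ≤ d1) (hy : y0 ≤ y1) (hc : ¬(d0 < d1 ∧ y0 < y1)) :
    switch d1 y1 y0 = switch d0 y1 y0 := by
  rcases hd0 with rfl | rfl <;> rcases hd1 with rfl | rfl <;>
    rcases hy0 with rfl | rfl <;> rcases hy1 with rfl | rfl <;> norm_num at *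

lemma piWeight_balance {p0 p1 : ℝ} (hp : p0 + p1 = 1) (hp0 : p0 ≠ 0) (hp1 : p1 ≠ 0)
    {d0 d1 y0 y1 : ℝ} (hd0 : d0 = 0 ∨ d0 = 1) (hd1 : d1 = 0 ∨ d1 = 1)
    (hy0 : y0 = 0 ∨ y0 = 1) (hy1 : y1 = 0 ∨ y1 = 1) (hd : d0 ≤ d1) (hy : y0 ≤ y1)
    (χ : ℝ → ℝ) :
    p1 * (piWeight p0 p1 1 (switch d1 y1 y0) * χ (switch d1 y1 y0))
        + p0 * (piWeight p0 p1 0 (switch d0 y1 y0) * χ (switch d0 y1 y0))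
      = p1 * ((if d0 < d1 ∧ y0 < y1 then 1 else 0) * χ (switch d1 y1 y0))
        + p0 * ((if d0 < d1 ∧ y0 < y1 then 1 else 0) * χ (switch d0 y1 y0)) := by
  by_cases hc : d0 < d1 ∧ y0 < y1
  · obtain ⟨rfl, rfl⟩ : d0 = 0 ∧ d1 = 1 := by
      rcases hd0 with rfl | rfl <;> rcases hd1 with rfl | rfl <;> norm_num at *
    obtain ⟨rfl, rfl⟩ : y0 = 0 ∧ y1 = 1 := by
      rcases hy0 with rfl | rfl <;> rcases hy1 with rfl | rfl <;> norm_num at *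
    simp [piWeight]
  · rw [switch_eq_switch_of_not_complier hd0 hd1 hy0 hy1 hd hy hc, if_neg hc]
    linear_combination χ (switch d0 y1 y0) * (piWeight_mix_eq hp0 hp1 (switch d0 y1 y0) + hp)

theorem setIntegral_preimage_of_indepFun_binary [MeasurableSpace β] [MeasurableSpace γ]
    {W : Ω → β} {Z : Ω → ℝ} (hWZ : IndepFun W Z μ) (hW : Measurable W)
    (hZ : Measurable Z) (hZbin : ∀ ω, Z ω = 0 ∨ Z ω = 1) {v : ℝ → Ω → γ}
    (hv : Measurable fun ω => v (Z ω) ω)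
    (hv1 : Measurable[MeasurableSpace.comap W inferInstance] (v 1))
    (hv0 : Measurable[MeasurableSpace.comap W inferInstance] (v 0)) {F : ℝ → Ω → ℝ}
    (hF1 : Measurable[MeasurableSpace.comap W inferInstance] (F 1))
    (hF0 : Measurable[MeasurableSpace.comap W inferInstance] (F 0))
    (hF1i : Integrable (F 1) μ) (hF0i : Integrable (F 0) μ) {t : Set γ}
    (ht : MeasurableSet t) :
    ∫ ω in (fun ω => v (Z ω) ω) ⁻¹' t, F (Z ω) ω ∂μ
      = ∫ ω, μ.real {ω | Z ω = 1} * (F 1 ω * t.indicator (fun _ => 1) (v 1 ω))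
          + μ.real {ω | Z ω = 0} * (F 0 ω * t.indicator (fun _ => 1) (v 0 ω)) ∂μ := by
  have hχ : ∀ z, Measurable[MeasurableSpace.comap W inferInstance] (v z) →
      Measurable[MeasurableSpace.comap W inferInstance]
        fun ω => t.indicator (fun _ => (1 : ℝ)) (v z ω) :=
    fun z hvz => (measurable_const.indicator ht).comp hvz
  have hχ_le : ∀ z, ∀ᵐ ω ∂μ, ‖t.indicator (fun _ => (1 : ℝ)) (v z ω)‖ ≤ 1 := fun z =>
    ae_of_all _ fun ω => (norm_indicator_le_norm_self (fun _ => (1 : ℝ)) _).trans (by simp)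
  have hχm : ∀ z, Measurable[MeasurableSpace.comap W inferInstance] (v z) →
      AEStronglyMeasurable (fun ω => t.indicator (fun _ => (1 : ℝ)) (v z ω)) μ :=
    fun z hvz => ((hχ z hvz).mono hW.comap_le le_rfl).aestronglyMeasurable
  have hobs : ∀ ω, ((fun ω => v (Z ω) ω) ⁻¹' t).indicator (fun ω => F (Z ω) ω) ω
      = switch (Z ω) (F 1 ω * t.indicator (fun _ => 1) (v 1 ω))
          (F 0 ω * t.indicator (fun _ => 1) (v 0 ω)) := by
    intro ω
    rw [← eq_switch_of_binary (hZbin ω) (fun z => F z ω * t.indicator (fun _ => 1) (v z ω))]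
    by_cases h : v (Z ω) ω ∈ t <;> simp [h]
  rw [← integral_indicator (ht.preimage hv)]
  simp_rw [hobs]
  exact integral_switch_of_indepFun hWZ hZ hZbin (hF1.mul (hχ 1 hv1)) (hF0.mul (hχ 0 hv0))
    (hF1i.mul_bdd (hχm 1 hv1) (hχ_le 1)) (hF0i.mul_bdd (hχm 0 hv0) (hχ_le 0))

theorem setIntegral_piWeight_eq_setIntegral_complier [IsProbabilityMeasure μ]
    {Z D0 D1 Y0 Y1 X Y : Ω → ℝ} (hZm : Measurable Z) (hD0m : Measurable D0)
    (hD1m : Measurable D1) (hY0m : Measurable Y0) (hY1m : Measurable Y1) (hXm : Measurable X)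
    (hZbin : ∀ ω, Z ω = 0 ∨ Z ω = 1) (hD0bin : ∀ ω, D0 ω = 0 ∨ D0 ω = 1)
    (hD1bin : ∀ ω, D1 ω = 0 ∨ D1 ω = 1) (hY0bin : ∀ ω, Y0 ω = 0 ∨ Y0 ω = 1)
    (hY1bin : ∀ ω, Y1 ω = 0 ∨ Y1 ω = 1)
    (hY : ∀ ω, Y ω = switch (switch (Z ω) (D1 ω) (D0 ω)) (Y1 ω) (Y0 ω))
    (hindep : IndepFun (fun ω => (X ω, Y0 ω, Y1 ω, D0 ω, D1 ω)) Z μ)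
    (hp0 : μ.real {ω | Z ω = 0} ≠ 0) (hp1 : μ.real {ω | Z ω = 1} ≠ 0)
    (hmonoD : ∀ᵐ ω ∂μ, D0 ω ≤ D1 ω) (hmonoY : ∀ᵐ ω ∂μ, Y0 ω ≤ Y1 ω)
    {t : Set (ℝ × ℝ)} (ht : MeasurableSet t) :
    ∫ ω in (fun ω => (Y ω, X ω)) ⁻¹' t,
        piWeight (μ.real {ω | Z ω = 0}) (μ.real {ω | Z ω = 1}) (Z ω) (Y ω) ∂μ
      = ∫ ω in (fun ω => (Y ω, X ω)) ⁻¹' t,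
          {ω | D0 ω < D1 ω ∧ Y0 ω < Y1 ω}.indicator (fun _ => 1) ω ∂μ := by
  set W := fun ω => (X ω, Y0 ω, Y1 ω, D0 ω, D1 ω)
  have hWm : Measurable W := by fun_prop
  have hW : Measurable[MeasurableSpace.comap W inferInstance] W := comap_measurable W
  have hX : Measurable[MeasurableSpace.comap W inferInstance] X := hW.fst
  have hY0 : Measurable[MeasurableSpace.comap W inferInstance] Y0 := hW.snd.fst
  have hY1 : Measurable[MeasurableSpace.comap W inferInstance] Y1 := hW.snd.snd.fst
  have hD0 : Measurable[MeasurableSpace.comap W inferInstance] D0 := hW.snd.snd.snd.fst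
  have hD1 : Measurable[MeasurableSpace.comap W inferInstance] D1 := hW.snd.snd.snd.snd
  set yPot : ℝ → Ω → ℝ := fun z ω => switch (switch z (D1 ω) (D0 ω)) (Y1 ω) (Y0 ω)
  obtain rfl : Y = fun ω => yPot (Z ω) ω := funext hY
  dsimp only
  have hyPot : ∀ z, (z = 0 ∨ z = 1) → Integrable (yPot z) μ := fun z hz =>
    integrable_of_binary (by fun_prop : Measurable (yPot z)).aestronglyMeasurable fun ω =>
      switch_binary (switch_binary hz (hD1bin ω) (hD0bin ω)) (hY1bin ω) (hY0bin ω)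
  have hyPot1 := hyPot 1 (.inr rfl)
  have hyPot0 := hyPot 0 (.inl rfl)
  have hC : Measurable[MeasurableSpace.comap W inferInstance]
      ({ω | D0 ω < D1 ω ∧ Y0 ω < Y1 ω}.indicator fun _ => (1 : ℝ)) :=
    measurable_const.indicator ((measurableSet_lt hD0 hD1).inter (measurableSet_lt hY0 hY1))
  have hCi : Integrable ({ω | D0 ω < D1 ω ∧ Y0 ω < Y1 ω}.indicator fun _ => (1 : ℝ)) μ :=
    (integrable_const 1).indicator
      ((measurableSet_lt hD0m hD1m).inter (measurableSet_lt hY0m hY1m))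
  rw [setIntegral_preimage_of_indepFun_binary (v := fun z ω => (yPot z ω, X ω))
      (F := fun z ω => piWeight (μ.real {ω | Z ω = 0}) (μ.real {ω | Z ω = 1}) z (yPot z ω))
      hindep hWm hZm hZbin (by fun_prop) (by fun_prop) (by fun_prop)
      (by unfold piWeight; fun_prop) (by unfold piWeight; fun_prop)
      (by unfold piWeight; fun_prop) (by unfold piWeight; fun_prop) ht,
    setIntegral_preimage_of_indepFun_binary (v := fun z ω => (yPot z ω, X ω))
      (F := fun _ => {ω | D0 ω < D1 ω ∧ Y0 ω < Y1 ω}.indicator fun _ => (1 : ℝ))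
      hindep hWm hZm hZbin (by fun_prop) (by fun_prop) (by fun_prop) hC hC hCi hCi ht]
  refine integral_congr_ae ?_
  filter_upwards [hmonoD, hmonoY] with ω hd hy
  have hp := measureReal_eq_zero_add_measureReal_eq_one (μ := μ) hZm hZbin
  have := piWeight_balance hp hp0 hp1 (hD0bin ω) (hD1bin ω) (hY0bin ω) (hY1bin ω)
    hd hy (fun y => t.indicator (fun _ => 1) (y, X ω))
  simp only [yPot, switch_one, switch_zero]
  rw [Set.indicator_apply {ω | D0 ω < D1 ω ∧ Y0 ω < Y1 ω}]
  exact this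

theorem condExp_piWeight_ae_eq_condExp_complier [IsProbabilityMeasure μ]
    {Z D0 D1 Y0 Y1 X Y : Ω → ℝ} (hZm : Measurable Z) (hD0m : Measurable D0)
    (hD1m : Measurable D1) (hY0m : Measurable Y0) (hY1m : Measurable Y1) (hXm : Measurable X)
    (hZbin : ∀ ω, Z ω = 0 ∨ Z ω = 1) (hD0bin : ∀ ω, D0 ω = 0 ∨ D0 ω = 1)
    (hD1bin : ∀ ω, D1 ω = 0 ∨ D1 ω = 1) (hY0bin : ∀ ω, Y0 ω = 0 ∨ Y0 ω = 1)
    (hY1bin : ∀ ω, Y1 ω = 0 ∨ Y1 ω = 1)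
    (hY : ∀ ω, Y ω = switch (switch (Z ω) (D1 ω) (D0 ω)) (Y1 ω) (Y0 ω))
    (hindep : IndepFun (fun ω => (X ω, Y0 ω, Y1 ω, D0 ω, D1 ω)) Z μ)
    (hp0 : μ.real {ω | Z ω = 0} ≠ 0) (hp1 : μ.real {ω | Z ω = 1} ≠ 0)
    (hmonoD : ∀ᵐ ω ∂μ, D0 ω ≤ D1 ω) (hmonoY : ∀ᵐ ω ∂μ, Y0 ω ≤ Y1 ω) :
    μ[fun ω => piWeight (μ.real {ω | Z ω = 0}) (μ.real {ω | Z ω = 1}) (Z ω) (Y ω)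
        | MeasurableSpace.comap (fun ω => (Y ω, X ω)) inferInstance]
      =ᵐ[μ] μ[{ω | D0 ω < D1 ω ∧ Y0 ω < Y1 ω}.indicator fun _ => 1
        | MeasurableSpace.comap (fun ω => (Y ω, X ω)) inferInstance] := by
  have hYm : Measurable Y := by
    rw [funext hY]
    fun_prop
  have hYbin : ∀ ω, Y ω = 0 ∨ Y ω = 1 := fun ω => hY ω ▸
    switch_binary (switch_binary (hZbin ω) (hD1bin ω) (hD0bin ω)) (hY1bin ω) (hY0bin ω)
  have hC : MeasurableSet {ω | D0 ω < D1 ω ∧ Y0 ω < Y1 ω} :=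
    (measurableSet_lt hD0m hD1m).inter (measurableSet_lt hY0m hY1m)
  exact condExp_comap_ae_eq_of_forall_setIntegral_preimage_eq (hYm.prodMk hXm)
    (integrable_piWeight hZm hYm hZbin hYbin _ _) ((integrable_const 1).indicator hC)
    fun t ht => setIntegral_piWeight_eq_setIntegral_complier hZm hD0m hD1m hY0m hY1m hXm hZbin
      hD0bin hD1bin hY0bin hY1bin hY hindep hp0 hp1 hmonoD hmonoY ht

end BinaryIV

open BinaryIV

theorem conditional_pi_weight_positivity
    {Ω : Type} [mΩ : MeasurableSpace Ω] (μ : Measure Ω) [IsProbabilityMeasure μ]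
    (Z D0 D1 Y0 Y1 D Y X : Ω → ℝ)
    (hZm : Measurable Z) (hD0m : Measurable D0) (hD1m : Measurable D1)
    (hY0m : Measurable Y0) (hY1m : Measurable Y1) (hXm : Measurable X)
    (hZbin : ∀ ω, Z ω = 0 ∨ Z ω = 1)
    (hD0bin : ∀ ω, D0 ω = 0 ∨ D0 ω = 1)
    (hD1bin : ∀ ω, D1 ω = 0 ∨ D1 ω = 1)
    (hY0bin : ∀ ω, Y0 ω = 0 ∨ Y0 ω = 1)
    (hY1bin : ∀ ω, Y1 ω = 0 ∨ Y1 ω = 1)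
    (hD : ∀ ω, D ω = Z ω * D1 ω + (1 - Z ω) * D0 ω)
    (hY : ∀ ω, Y ω = D ω * Y1 ω + (1 - D ω) * Y0 ω)
    (hindep : IndepFun (fun ω => (X ω, Y0 ω, Y1 ω, D0 ω, D1 ω)) Z μ)
    (hz0 : 0 < μ {ω | Z ω = 1}) (hz1 : μ {ω | Z ω = 1} < 1)
    (hmonoD : ∀ᵐ ω ∂μ, D0 ω ≤ D1 ω)
    (hmonoY : ∀ᵐ ω ∂μ, Y0 ω ≤ Y1 ω)
    (κ κ0 κ1 π : Ω → ℝ)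
    (hκ : ∀ ω, κ ω = 1 - D ω * (1 - Z ω) / (μ {ω' | Z ω' = 0}).toReal
        - (1 - D ω) * Z ω / (μ {ω' | Z ω' = 1}).toReal)
    (hκ0 : ∀ ω, κ0 ω = (1 - D ω) * (1 - Z ω) / (μ {ω' | Z ω' = 0}).toReal
        - (1 - D ω) * Z ω / (μ {ω' | Z ω' = 1}).toReal)
    (hκ1 : ∀ ω, κ1 ω = D ω * Z ω / (μ {ω' | Z ω' = 1}).toReal
        - D ω * (1 - Z ω) / (μ {ω' | Z ω' = 0}).toReal)
    (hπ : ∀ ω, π ω = κ ω - κ0 ω * Y ω - κ1 ω * (1 - Y ω))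
    (m : MeasurableSpace Ω)
    (hm : m = MeasurableSpace.comap (fun ω => (Y ω, X ω)) inferInstance) :
    (μ[π | m]
      =ᵐ[μ] μ[Set.indicator {ω | D0 ω < D1 ω ∧ Y0 ω < Y1 ω} (fun _ => (1 : ℝ)) | m])
    ∧ (∀ᵐ ω ∂μ, 0 ≤ (μ[π | m]) ω) := by
  subst hm
  have hp1 : μ.real {ω | Z ω = 1} ≠ 0 := (ENNReal.toReal_pos hz0.ne' (measure_ne_top _ _)).ne'
  have hp0 := measureReal_eq_zero_ne_zero_of_lt_one hZm hZbin hz1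
  have hY' : ∀ ω, Y ω = switch (switch (Z ω) (D1 ω) (D0 ω)) (Y1 ω) (Y0 ω) := fun ω => by
    rw [hY, hD]; rfl
  obtain rfl : π = fun ω => piWeight (μ.real {ω | Z ω = 0}) (μ.real {ω | Z ω = 1}) (Z ω) (Y ω) :=
    funext fun ω => by rw [hπ, hκ, hκ0, hκ1]; unfold piWeight Measure.real; ring
  have hcond := condExp_piWeight_ae_eq_condExp_complier hZm hD0m hD1m hY0m hY1m hXm hZbin
    hD0bin hD1bin hY0bin hY1bin hY' hindep hp0 hp1 hmonoD hmonoY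
  refine ⟨hcond, ?_⟩
  have hCnonneg : 0 ≤ᵐ[μ] {ω | D0 ω < D1 ω ∧ Y0 ω < Y1 ω}.indicator fun _ => (1 : ℝ) :=
    ae_of_all μ fun ω => Set.indicator_nonneg (fun _ _ => zero_le_one) ω
  filter_upwards [hcond, condExp_nonneg hCnonneg] with ω h h'
  exact h ▸ h'
end
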